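/- arXiv:2511.13613 — 5 statements merged into one kernel-verified Lean document; each statement's English description precedes it below -/
import Mathlib

section
/- For 0 ≤ j ≤ ℓ-1, the cyclotomic number (0, j) is odd if and only if 2 lies in the coset g^j K. -/
/-- Cyclotomic number `(i, j)` with respect to generator `g` and divisor `ℓ`. -/
noncomputable def cyc {F : Type*} [Field F] [Fintype F] (g : Fˣ) (ℓ : ℕ) (i j : ℤ) : ℕ :=
  Nat.card {x : F // (∃ y : Fˣ, x = 1 + ((g ^ i * y ^ ℓ : Fˣ) : F)) ∧
    ∃ z : Fˣ, x = ((g ^ j * z ^ ℓ : Fˣ) : F)}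

/-! The map `x ↦ x / (x - 1)` is an involution of `(1 + K) ∩ cK` for every subgroup `K` of `Fˣ`:
it inverts `x - 1` and multiplies `x` by `(x - 1)⁻¹ ∈ K`. Its only possible fixed point is `x = 2`,
so the parity of `|(1 + K) ∩ cK|` records whether `2 ∈ cK`. -/

open Function

theorem Function.Involutive.card_modEq_card_fixedPoints {α : Type*} [Finite α] {f : α → α}
    (hf : Involutive f) : Nat.card α ≡ Nat.card (fixedPoints f) [MOD 2] := by
  classical
  have := Fintype.ofFinite α
  have hf2 : (show Function.End α from f) ^ 2 ^ 1 = 1 := funext hf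
  simpa only [Nat.card_eq_fintype_card] using Equiv.Perm.card_fixedPoints_modEq hf2

theorem Function.Involutive.odd_card_iff_nonempty_fixedPoints {α : Type*} [Finite α]
    {f : α → α} (hf : Involutive f) (hfix : (fixedPoints f).Subsingleton) :
    Odd (Nat.card α) ↔ (fixedPoints f).Nonempty := by
  have hle : Nat.card (fixedPoints f) ≤ 1 :=
    Finite.card_le_one_iff_subsingleton.2 hfix.coe_sort
  rw [Nat.odd_iff, hf.card_modEq_card_fixedPoints, ← Set.nonempty_coe_sort,
    ← Finite.card_pos_iff]
  omega

section Field

variable {F : Type*} [Field F]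

theorem div_sub_one_sub_one {x : F} (hx : x ≠ 1) : x / (x - 1) - 1 = (x - 1)⁻¹ := by
  have : x - 1 ≠ 0 := sub_ne_zero.2 hx
  field_simp
  ring

theorem div_sub_one_div_div_sub_one_sub_one {x : F} (hx : x ≠ 1) :
    x / (x - 1) / (x / (x - 1) - 1) = x := by
  rw [div_sub_one_sub_one hx, div_inv_eq_mul, div_mul_cancel₀ _ (sub_ne_zero.2 hx)]

theorem div_sub_one_eq_self_iff {x : F} (h0 : x ≠ 0) (h1 : x ≠ 1) :
    x / (x - 1) = x ↔ x = 2 := by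
  rw [div_eq_iff (sub_ne_zero.2 h1), eq_comm, mul_right_eq_self₀, or_iff_left h0,
    sub_eq_iff_eq_add, one_add_one_eq_two]

def cyclotomicSet (K : Subgroup Fˣ) (c : Fˣ) : Set F :=
  {x | (∃ k ∈ K, x = 1 + (k : F)) ∧ ∃ k ∈ K, x = ((c * k : Fˣ) : F)}

namespace cyclotomicSet

variable {K : Subgroup Fˣ} {c : Fˣ} {x : F}

theorem ne_zero (hx : x ∈ cyclotomicSet K c) : x ≠ 0 := by
  obtain ⟨-, k, -, rfl⟩ := hx
  exact Units.ne_zero _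

theorem ne_one (hx : x ∈ cyclotomicSet K c) : x ≠ 1 := by
  obtain ⟨⟨k, -, rfl⟩, -⟩ := hx
  simp

theorem div_sub_one_mem (hx : x ∈ cyclotomicSet K c) : x / (x - 1) ∈ cyclotomicSet K c := by
  have hx1 := ne_one hx
  obtain ⟨⟨k, hk, hxk⟩, l, hl, hxl⟩ := hx
  have hsub : x - 1 = k := by rw [hxk, add_sub_cancel_left]
  refine ⟨⟨k⁻¹, inv_mem hk, ?_⟩, l * k⁻¹, mul_mem hl (inv_mem hk), ?_⟩
  · rw [← sub_eq_iff_eq_add', div_sub_one_sub_one hx1, hsub, Units.val_inv_eq_inv_val]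
  · rw [hsub, ← mul_assoc, Units.val_mul, Units.val_inv_eq_inv_val, ← hxl, div_eq_mul_inv]

theorem two_mem_iff : (2 : F) ∈ cyclotomicSet K c ↔ ∃ k ∈ K, (2 : F) = ((c * k : Fˣ) : F) :=
  and_iff_right ⟨1, K.one_mem, by norm_num⟩

def divSubOne (K : Subgroup Fˣ) (c : Fˣ) : cyclotomicSet K c → cyclotomicSet K c :=
  fun x => ⟨x / (x - 1), div_sub_one_mem x.2⟩

theorem involutive_divSubOne : Involutive (divSubOne K c) := fun x =>
  Subtype.ext (div_sub_one_div_div_sub_one_sub_one (ne_one x.2))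

theorem isFixedPt_divSubOne_iff {x : cyclotomicSet K c} :
    IsFixedPt (divSubOne K c) x ↔ (x : F) = 2 := by
  rw [IsFixedPt, Subtype.ext_iff]
  exact div_sub_one_eq_self_iff (ne_zero x.2) (ne_one x.2)

theorem odd_card_iff [Finite F] :
    Odd (Nat.card (cyclotomicSet K c)) ↔ (2 : F) ∈ cyclotomicSet K c := by
  rw [involutive_divSubOne.odd_card_iff_nonempty_fixedPoints]
  · constructor
    · rintro ⟨x, hx⟩
      exact isFixedPt_divSubOne_iff.1 hx ▸ x.2
    · intro h2
      exact ⟨⟨2, h2⟩, isFixedPt_divSubOne_iff.2 rfl⟩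
  · intro x hx y hy
    exact Subtype.ext ((isFixedPt_divSubOne_iff.1 hx).trans (isFixedPt_divSubOne_iff.1 hy).symm)

end cyclotomicSet

end Field

theorem cyc_zero_eq_card_cyclotomicSet {F : Type*} [Field F] [Fintype F] (g : Fˣ) (ℓ : ℕ)
    (j : ℤ) : cyc g ℓ 0 j = Nat.card (cyclotomicSet (powMonoidHom ℓ).range (g ^ j)) := by
  simp only [cyc, cyclotomicSet, Set.coe_ofPred, MonoidHom.mem_range, powMonoidHom_apply,
    exists_exists_eq_and, zpow_zero, one_mul]

theorem cyc_zero_odd_iff_general {F : Type*} [Field F] [Fintype F] (g : Fˣ) (ℓ : ℕ)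
    (j : ℕ) :
    Odd (cyc g ℓ 0 (j : ℤ)) ↔ ∃ y : Fˣ, (2 : F) = ((g ^ (j : ℤ) * y ^ ℓ : Fˣ) : F) := by
  rw [cyc_zero_eq_card_cyclotomicSet, cyclotomicSet.odd_card_iff, cyclotomicSet.two_mem_iff]
  simp only [MonoidHom.mem_range, powMonoidHom_apply, exists_exists_eq_and]

/-- Lehmer's Lemma I: `(0, j)` is odd iff `2 ∈ gʲK`. -/
theorem cyc_zero_odd_iff {F : Type*} [Field F] [Fintype F] (g : Fˣ) (ℓ : ℕ)
    (hg : ∀ x : Fˣ, x ∈ Subgroup.zpowers g)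
    (hodd : Odd (Fintype.card F)) (hℓ : ℓ ∣ Fintype.card F - 1)
    (j : ℕ) (hj : j ≤ ℓ - 1) :
    Odd (cyc g ℓ 0 (j : ℤ)) ↔ ∃ y : Fˣ, (2 : F) = ((g ^ (j : ℤ) * y ^ ℓ : Fˣ) : F) :=
  cyc_zero_odd_iff_general g ℓ j
end

section
/- For integers i and v with 0 ≤ i, v ≤ ℓ-1, in the group ring Z[F_q] (with the additive group of F_q written multiplicatively) the product α_i · α_v equals δ_{i, v+q'} · 1 + Σ_{j=0}^{ℓ-1} (i-v, j-v) α_j, where α_s denotes the formal sum of the elements of the coset g^s K, δ_{s,t} = k if s ≡ t (mod ℓ) and 0 otherwise, and q' = (q-1)/2. -/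
/-- `α_s`: the formal sum, in the integral group ring of the additive group of `F`
(written multiplicatively), of the elements of the coset `gˢK`. -/
noncomputable def alpha {F : Type*} [Field F] [Fintype F] (g : Fˣ) (ℓ : ℕ) (s : ℤ) :
    MonoidAlgebra ℤ (Multiplicative F) :=
  ∑ x ∈ (Set.toFinite {x : F | ∃ y : Fˣ, x = ((g ^ s * y ^ ℓ : Fˣ) : F)}).toFinset,
    MonoidAlgebra.of ℤ (Multiplicative F) (Multiplicative.ofAdd x)

open Finset

theorem MonoidAlgebra.sum_of_ofAdd_mul_sum_of_ofAdd {R G : Type*} [Semiring R] [AddCommGroup G]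
    [Fintype G] [DecidableEq G] (A B : Finset G) :
    (∑ a ∈ A, of R (Multiplicative G) (.ofAdd a)) * ∑ b ∈ B, of R (Multiplicative G) (.ofAdd b) =
      ∑ c, #{b ∈ B | c - b ∈ A} • of R (Multiplicative G) (.ofAdd c) := by
  have translate (b : G) : ∑ a ∈ A, of R (Multiplicative G) (.ofAdd (a + b)) =
      ∑ c, if c - b ∈ A then of R (Multiplicative G) (.ofAdd c) else 0 := by
    have hmap : ({c | c - b ∈ A} : Finset G) = A.map (addRightEmbedding b) := by
      ext c
      simp [← eq_sub_iff_add_eq]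
    rw [← sum_filter, hmap, sum_map]
    rfl
  simp_rw [card_eq_sum_ones, sum_smul, one_smul, sum_filter, sum_mul_sum, ← map_mul,
    ← ofAdd_add]
  rw [sum_comm]
  simp_rw [translate]
  exact sum_comm

theorem exists_coe_zpow_eq_of_forall_mem_zpowers {M : Type*} [GroupWithZero M] {g : Mˣ}
    (hg : ∀ x : Mˣ, x ∈ Subgroup.zpowers g) {x : M} (hx : x ≠ 0) :
    ∃ a : ℤ, ((g ^ a : Mˣ) : M) = x := by
  obtain ⟨a, ha⟩ := hg (Units.mk0 x hx)
  exact ⟨a, by simpa using congrArg Units.val ha⟩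

section CyclotomicClass

variable {F : Type*} [Field F] [Fintype F] (g : Fˣ) (ℓ : ℕ)

noncomputable def cyclotomicClass (s : ℤ) : Finset F :=
  (Set.toFinite {x : F | ∃ y : Fˣ, x = ((g ^ s * y ^ ℓ : Fˣ) : F)}).toFinset

variable {g ℓ}

theorem mem_cyclotomicClass {s : ℤ} {x : F} :
    x ∈ cyclotomicClass g ℓ s ↔ ∃ y : Fˣ, x = ((g ^ s * y ^ ℓ : Fˣ) : F) := by
  simp [cyclotomicClass]

theorem alpha_eq_sum_cyclotomicClass (s : ℤ) :
    alpha g ℓ s = ∑ x ∈ cyclotomicClass g ℓ s,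
      MonoidAlgebra.of ℤ (Multiplicative F) (.ofAdd x) :=
  rfl

theorem zero_notMem_cyclotomicClass (s : ℤ) : (0 : F) ∉ cyclotomicClass g ℓ s := by
  rw [mem_cyclotomicClass]
  rintro ⟨y, hy⟩
  exact (g ^ s * y ^ ℓ).ne_zero hy.symm

theorem ne_zero_of_mem_cyclotomicClass {s : ℤ} {x : F} (hx : x ∈ cyclotomicClass g ℓ s) :
    x ≠ 0 :=
  ne_of_mem_of_not_mem hx (zero_notMem_cyclotomicClass s)

theorem zpow_mem_cyclotomicClass_of_dvd {a s : ℤ} (h : (ℓ : ℤ) ∣ a - s) :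
    ((g ^ a : Fˣ) : F) ∈ cyclotomicClass g ℓ s := by
  obtain ⟨m, hm⟩ := h
  refine mem_cyclotomicClass.mpr ⟨g ^ m, ?_⟩
  rw [← zpow_natCast, ← zpow_mul, ← zpow_add, mul_comm m, ← hm, add_sub_cancel]

theorem mul_mem_cyclotomicClass {s t : ℤ} {x y : F} (hx : x ∈ cyclotomicClass g ℓ s)
    (hy : y ∈ cyclotomicClass g ℓ t) : x * y ∈ cyclotomicClass g ℓ (s + t) := by
  obtain ⟨a, rfl⟩ := mem_cyclotomicClass.mp hx
  obtain ⟨b, rfl⟩ := mem_cyclotomicClass.mp hy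
  refine mem_cyclotomicClass.mpr ⟨a * b, ?_⟩
  rw [← Units.val_mul, zpow_add, mul_pow, mul_mul_mul_comm]

theorem inv_mem_cyclotomicClass {s : ℤ} {x : F} (hx : x ∈ cyclotomicClass g ℓ s) :
    x⁻¹ ∈ cyclotomicClass g ℓ (-s) := by
  obtain ⟨a, rfl⟩ := mem_cyclotomicClass.mp hx
  refine mem_cyclotomicClass.mpr ⟨a⁻¹, ?_⟩
  rw [← Units.val_inv_eq_inv_val, mul_inv, zpow_neg, inv_pow, mul_comm]

theorem div_mem_cyclotomicClass_iff {s t : ℤ} {x b : F} (hb : b ∈ cyclotomicClass g ℓ t) :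
    x / b ∈ cyclotomicClass g ℓ (s - t) ↔ x ∈ cyclotomicClass g ℓ s := by
  refine ⟨fun h => ?_, fun h => ?_⟩
  · simpa [div_mul_cancel₀ x (ne_zero_of_mem_cyclotomicClass hb)] using
      mul_mem_cyclotomicClass h hb
  · simpa [div_eq_mul_inv, sub_eq_add_neg] using
      mul_mem_cyclotomicClass h (inv_mem_cyclotomicClass hb)

theorem card_cyclotomicClass_eq (s t : ℤ) :
    #(cyclotomicClass g ℓ s) = #(cyclotomicClass g ℓ t) := by
  have shift (a b : ℤ) {x : F} (hx : x ∈ cyclotomicClass g ℓ a) :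
      ((g ^ (b - a) : Fˣ) : F) * x ∈ cyclotomicClass g ℓ b := by
    simpa using mul_mem_cyclotomicClass (zpow_mem_cyclotomicClass_of_dvd (s := b - a)
      (by simp)) hx
  refine card_nbij' (((g ^ (t - s) : Fˣ) : F) * ·) (((g ^ (s - t) : Fˣ) : F) * ·)
    (fun x hx => shift s t hx) (fun x hx => shift t s hx) (fun x _ => ?_) (fun x _ => ?_)
  all_goals
    simp only [← mul_assoc, ← Units.val_mul, ← zpow_add]
    simp

theorem cyc_eq_card_filter [DecidableEq F] (I J : ℤ) :
    cyc g ℓ I J = #{x ∈ cyclotomicClass g ℓ J | x - 1 ∈ cyclotomicClass g ℓ I} := by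
  rw [cyc, Nat.card_eq_fintype_card, Fintype.card_subtype]
  congr 1
  ext x
  simp [mem_cyclotomicClass, sub_eq_iff_eq_add', and_comm]

theorem card_filter_sub_mem_cyclotomicClass [DecidableEq F] {i v j : ℤ} {c : F}
    (hc : c ∈ cyclotomicClass g ℓ j) :
    #{b ∈ cyclotomicClass g ℓ v | c - b ∈ cyclotomicClass g ℓ i} = cyc g ℓ (i - v) (j - v) := by
  have hc0 := ne_zero_of_mem_cyclotomicClass hc
  rw [cyc_eq_card_filter]
  refine card_nbij' (c / ·) (c / ·) (fun b hb => ?_) (fun x hx => ?_)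
    (fun b _ => div_div_cancel₀ hc0) (fun x _ => div_div_cancel₀ hc0)
  · rw [mem_coe, mem_filter] at hb ⊢
    have hb0 := ne_zero_of_mem_cyclotomicClass hb.1
    refine ⟨(div_mem_cyclotomicClass_iff hb.1).mpr hc, ?_⟩
    rw [div_sub_one hb0]
    exact (div_mem_cyclotomicClass_iff hb.1).mpr hb.2
  · rw [mem_coe, mem_filter] at hx ⊢
    have hx0 := ne_zero_of_mem_cyclotomicClass hx.1
    have hcx : c / x ∈ cyclotomicClass g ℓ v := by
      simpa using (div_mem_cyclotomicClass_iff hx.1).mpr hc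
    refine ⟨hcx, (div_mem_cyclotomicClass_iff hcx).mp ?_⟩
    rw [show (c - c / x) / (c / x) = x - 1 by field_simp]
    exact hx.2

theorem pos_of_dvd_card_sub_one (hℓ : ℓ ∣ Fintype.card F - 1) : 0 < ℓ :=
  Nat.pos_of_dvd_of_pos hℓ (Nat.sub_pos_of_lt Fintype.one_lt_card)

section Generator

variable (hg : ∀ x : Fˣ, x ∈ Subgroup.zpowers g)
include hg

theorem orderOf_eq_card_sub_one : orderOf g = Fintype.card F - 1 := by
  rw [orderOf_eq_card_of_forall_mem_zpowers hg, Nat.card_units, Nat.card_eq_fintype_card]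

theorem coe_zpow_card_sub_one_div_two (hodd : Odd (Fintype.card F)) :
    ((g ^ (((Fintype.card F - 1) / 2 : ℕ) : ℤ) : Fˣ) : F) = -1 := by
  have htwo : 2 ≤ Fintype.card F := Fintype.one_lt_card
  have hprim : IsPrimitiveRoot (g : F) (Fintype.card F - 1) :=
    IsPrimitiveRoot.coe_units_iff.mpr (orderOf_eq_card_sub_one hg ▸ IsPrimitiveRoot.orderOf g)
  rw [zpow_natCast, Units.val_pow_eq_pow_val]
  refine (hprim.pow (by omega) ?_).eq_neg_one_of_two_right
  obtain ⟨c, hc⟩ := hodd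
  omega

variable (hℓ : ℓ ∣ Fintype.card F - 1)
include hℓ

theorem zpow_mem_cyclotomicClass_iff {a s : ℤ} :
    ((g ^ a : Fˣ) : F) ∈ cyclotomicClass g ℓ s ↔ (ℓ : ℤ) ∣ a - s := by
  refine ⟨fun h => ?_, zpow_mem_cyclotomicClass_of_dvd⟩
  obtain ⟨y, hy⟩ := mem_cyclotomicClass.mp h
  obtain ⟨m, rfl⟩ := hg y
  have hexp : g ^ a = g ^ (s + ℓ * m) := by
    simp [Units.ext hy, zpow_add, zpow_mul, mul_comm]
  have hmod := (zpow_eq_zpow_iff_modEq.mp hexp).symm.dvd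
  rw [orderOf_eq_card_sub_one hg] at hmod
  have := (Int.natCast_dvd_natCast.mpr hℓ).trans hmod
  rw [show a - (s + ℓ * m) = (a - s) - ℓ * m by ring] at this
  exact (dvd_sub_left (dvd_mul_right _ _)).mp this

theorem dvd_sub_of_mem_cyclotomicClass {s t : ℤ} {x : F} (hs : x ∈ cyclotomicClass g ℓ s)
    (ht : x ∈ cyclotomicClass g ℓ t) : (ℓ : ℤ) ∣ s - t := by
  obtain ⟨a, rfl⟩ :=
    exists_coe_zpow_eq_of_forall_mem_zpowers hg (ne_zero_of_mem_cyclotomicClass hs)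
  rw [zpow_mem_cyclotomicClass_iff hg hℓ] at hs ht
  simpa using dvd_sub ht hs

theorem exists_lt_mem_cyclotomicClass {x : F} (hx : x ≠ 0) :
    ∃ j < ℓ, x ∈ cyclotomicClass g ℓ j := by
  have hℓ0 := pos_of_dvd_card_sub_one hℓ
  obtain ⟨a, rfl⟩ := exists_coe_zpow_eq_of_forall_mem_zpowers hg hx
  have hnonneg := Int.emod_nonneg a (by omega : (ℓ : ℤ) ≠ 0)
  have hlt := Int.emod_lt_of_pos a (by omega : (0 : ℤ) < ℓ)
  refine ⟨(a % ℓ).toNat, by omega, ?_⟩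
  rw [zpow_mem_cyclotomicClass_iff hg hℓ, Int.toNat_of_nonneg hnonneg]
  exact Int.dvd_self_sub_emod

theorem sum_eq_add_sum_cyclotomicClass {M : Type*} [AddCommMonoid M] (f : F → M) :
    ∑ x, f x = f 0 + ∑ j ∈ range ℓ, ∑ x ∈ cyclotomicClass g ℓ j, f x := by
  classical
  have hdisj : (range ℓ : Set ℕ).PairwiseDisjoint fun j : ℕ => cyclotomicClass g ℓ j := by
    intro i hi j hj hij
    refine disjoint_left.mpr fun x hxi hxj => hij ?_
    have := dvd_sub_of_mem_cyclotomicClass hg hℓ hxi hxj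
    simp only [coe_range, Set.mem_Iio] at hi hj
    have := Int.eq_zero_of_abs_lt_dvd this (by rw [abs_lt]; omega)
    omega
  have hcover : univ = insert 0 ((range ℓ).biUnion fun j : ℕ => cyclotomicClass g ℓ j) := by
    ext x
    by_cases hx : x = 0
    · simp [hx]
    · obtain ⟨j, hj, hxj⟩ := exists_lt_mem_cyclotomicClass hg hℓ hx
      simpa [hx] using ⟨j, hj, hxj⟩
  rw [hcover, sum_insert, sum_biUnion hdisj]
  simpa using fun (j : ℕ) _ => zero_notMem_cyclotomicClass (g := g) (ℓ := ℓ) j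

theorem card_cyclotomicClass (s : ℤ) :
    #(cyclotomicClass g ℓ s) = (Fintype.card F - 1) / ℓ := by
  have hℓ0 := pos_of_dvd_card_sub_one hℓ
  have hcount := sum_eq_add_sum_cyclotomicClass hg hℓ (fun _ => 1)
  simp only [sum_const, smul_eq_mul, mul_one, card_univ,
    card_cyclotomicClass_eq _ s, card_range] at hcount
  rw [hcount, Nat.add_sub_cancel_left, Nat.mul_div_cancel_left _ hℓ0]

theorem card_filter_neg_mem_cyclotomicClass [DecidableEq F] (hodd : Odd (Fintype.card F))
    (i v : ℤ) :
    #{b ∈ cyclotomicClass g ℓ v | -b ∈ cyclotomicClass g ℓ i} =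
      if (i - (v + ((Fintype.card F - 1) / 2 : ℕ))) % (ℓ : ℤ) = 0 then
        (Fintype.card F - 1) / ℓ else 0 := by
  have hneg_mem (b : F) (hb : b ∈ cyclotomicClass g ℓ v) : -b ∈ cyclotomicClass g ℓ i ↔
      (ℓ : ℤ) ∣ i - (v + ((Fintype.card F - 1) / 2 : ℕ)) := by
    rw [← div_mem_cyclotomicClass_iff hb, neg_div_self (ne_zero_of_mem_cyclotomicClass hb),
      ← coe_zpow_card_sub_one_div_two hg hodd, zpow_mem_cyclotomicClass_iff hg hℓ, ← dvd_neg,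
      neg_sub, sub_sub]
  split_ifs with h
  · rw [filter_true_of_mem fun b hb => (hneg_mem b hb).mpr (Int.dvd_of_emod_eq_zero h),
      card_cyclotomicClass hg hℓ]
  · rw [card_eq_zero, filter_eq_empty_iff]
    exact fun b hb hneg => h (Int.emod_eq_zero_of_dvd ((hneg_mem b hb).mp hneg))

end Generator

end CyclotomicClass

theorem alpha_mul_alpha_general {F : Type*} [Field F] [Fintype F] (g : Fˣ) (ℓ : ℕ)
    (hg : ∀ x : Fˣ, x ∈ Subgroup.zpowers g)
    (hodd : Odd (Fintype.card F)) (hℓ : ℓ ∣ Fintype.card F - 1)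
    (k : ℕ) (hk : k = (Fintype.card F - 1) / ℓ)
    (q' : ℤ) (hq' : q' = ((Fintype.card F - 1) / 2 : ℕ))
    (i v : ℤ) :
    alpha g ℓ i * alpha g ℓ v =
      (if (i - (v + q')) % (ℓ : ℤ) = 0 then (k : ℤ) else 0) • 1 +
      ∑ j ∈ Finset.range ℓ, (cyc g ℓ (i - v) ((j : ℤ) - v) : ℤ) • alpha g ℓ (j : ℤ) := by
  classical
  subst hk hq'
  rw [alpha_eq_sum_cyclotomicClass, alpha_eq_sum_cyclotomicClass,
    MonoidAlgebra.sum_of_ofAdd_mul_sum_of_ofAdd, sum_eq_add_sum_cyclotomicClass hg hℓ]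
  congr 1
  · simp_rw [zero_sub]
    rw [card_filter_neg_mem_cyclotomicClass hg hℓ hodd, ofAdd_zero, map_one,
      ← natCast_zsmul, Nat.cast_ite, Nat.cast_zero]
  · refine sum_congr rfl fun j _ => ?_
    rw [alpha_eq_sum_cyclotomicClass, smul_sum]
    refine sum_congr rfl fun c hc => ?_
    rw [card_filter_sub_mem_cyclotomicClass hc, natCast_zsmul]

theorem alpha_mul_alpha {F : Type*} [Field F] [Fintype F] (g : Fˣ) (ℓ : ℕ)
    (hg : ∀ x : Fˣ, x ∈ Subgroup.zpowers g)
    (hodd : Odd (Fintype.card F)) (hℓ : ℓ ∣ Fintype.card F - 1)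
    (k : ℕ) (hk : k = (Fintype.card F - 1) / ℓ)
    (q' : ℤ) (hq' : q' = ((Fintype.card F - 1) / 2 : ℕ))
    (i v : ℤ) (hi : 0 ≤ i) (hi' : i ≤ (ℓ : ℤ) - 1) (hv : 0 ≤ v) (hv' : v ≤ (ℓ : ℤ) - 1) :
    alpha g ℓ i * alpha g ℓ v =
      (if (i - (v + q')) % (ℓ : ℤ) = 0 then (k : ℤ) else 0) • 1 +
      ∑ j ∈ Finset.range ℓ, (cyc g ℓ (i - v) ((j : ℤ) - v) : ℤ) • alpha g ℓ (j : ℤ) :=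
  alpha_mul_alpha_general g ℓ hg hodd hℓ k hk q' hq' i v
end

section
/- Let A be the ℓ×ℓ cyclotomic matrix with entries A_{ij} = (i, j). Then the difference A^T A - A A^T equals k·(E_{q',q'} - E_{0,0}), where E_{s,t} is the matrix with a 1 in position (s,t) and zeros elsewhere, q' is the residue of (q-1)/2 modulo ℓ, and k = (q-1)/ℓ. In particular A is a normal matrix if and only if k is even. -/
open Matrix

/-- The cyclotomic matrix `A = [(i,j)]`, with integer entries. -/
noncomputable def cycMatrix {F : Type*} [Field F] [Fintype F] (g : Fˣ) (ℓ : ℕ) :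
    Matrix (Fin ℓ) (Fin ℓ) ℤ :=
  Matrix.of fun i j => (cyc g ℓ ((i : ℕ) : ℤ) ((j : ℕ) : ℤ) : ℤ)

/-!
The argument works for the cosets of an arbitrary subgroup `K ≤ Fˣ`. The `(C, D)` entry
of `AᵀA` counts pairs `u, v` in a common coset with `1 + u ∈ C`, `1 + v ∈ D`; with
`a = 1 + u`, `b = 1 + v` and `t = u / v ∈ K` these are the solutions of
`a - 1 = t (b - 1)` with `a ≠ 1`. Likewise the entries of `AAᵀ` count the solutions of
`a + 1 = t (b + 1)` with `a ≠ -1`. The substitution `(a, b, t) ↦ (a / t, t b, 1 / t)`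
matches all solutions of the two equations, so the difference comes only from the excluded
solutions `(1, 1, t)` and `(-1, -1, t)`, `t ∈ K`: it is `|K|` at the diagonal entries of the
cosets `K` and `-K`. For `K` the `ℓ`-th powers, `-1 = g ^ ((q - 1) / 2)` lies in `g ^ q' K`.
-/

section CosetCyclotomy

open Finset

variable {F : Type*} [Field F] [Fintype F] (K : Subgroup Fˣ)

open scoped Classical in
/-- For `c = 1`, `#(shiftPairs K 1 C D)` is the cyclotomic number `(C, D)`: it counts the `u ∈ C`
with `1 + u ∈ D`, recorded as pairs `(u, 1 + u)`. -/
noncomputable def shiftPairs (c : Fˣ) (C D : Fˣ ⧸ K) : Finset (Fˣ × Fˣ) :=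
  {p | (p.1 : Fˣ ⧸ K) = C ∧ (p.2 : Fˣ ⧸ K) = D ∧ (p.2 : F) = c + p.1}

open scoped Classical in
noncomputable def shiftTriples (c : Fˣ) (C D : Fˣ ⧸ K) : Finset (Fˣ × Fˣ × Fˣ) :=
  {x | (x.1 : Fˣ ⧸ K) = C ∧ (x.2.1 : Fˣ ⧸ K) = D ∧ x.2.2 ∈ K ∧
    (x.1 : F) - c = x.2.2 * (x.2.1 - c)}

theorem card_shiftPairs_neg (c : Fˣ) (C D : Fˣ ⧸ K) :
    #(shiftPairs K (-c) D C) = #(shiftPairs K c C D) := by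
  refine card_nbij' Prod.swap Prod.swap ?_ ?_ (fun _ _ ↦ rfl) (fun _ _ ↦ rfl) <;>
  · rintro ⟨u, w⟩
    simp only [shiftPairs, coe_filter, mem_univ, true_and, Set.mem_ofPred_eq, Prod.fst_swap,
      Prod.snd_swap, Units.val_neg]
    rintro ⟨hu, hw, h⟩
    exact ⟨hw, hu, by linear_combination -h⟩

theorem sum_card_shiftPairs_mul [DecidableEq F] [Fintype (Fˣ ⧸ K)] (c : Fˣ) (C D : Fˣ ⧸ K) :
    ∑ M, #(shiftPairs K c M C) * #(shiftPairs K c M D) =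
      #{x ∈ shiftTriples K c C D | x.1 ≠ c} := by
  simp_rw [← card_product]
  rw [← card_sigma]
  refine card_bij (fun p _ ↦ (p.2.1.2, p.2.2.2, p.2.1.1 / p.2.2.1)) ?_ ?_ ?_
  · rintro ⟨M, ⟨u, a⟩, ⟨v, b⟩⟩ hp
    simp only [mem_sigma, mem_univ, true_and, mem_product, shiftPairs, mem_filter] at hp
    obtain ⟨⟨rfl, ha, hau⟩, hv, hb, hbv⟩ := hp
    simp only [shiftTriples, mem_filter, mem_univ, true_and]
    refine ⟨⟨ha, hb, QuotientGroup.eq_iff_div_mem.mp hv.symm, ?_⟩, fun h ↦ u.ne_zero ?_⟩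
    · rw [hau, hbv, Units.val_div_eq_div_val]
      field_simp
      ring
    · rw [h] at hau
      linear_combination -hau
  · rintro ⟨M, ⟨u, a⟩, ⟨v, b⟩⟩ hp ⟨M', ⟨u', a'⟩, ⟨v', b'⟩⟩ hp' h
    simp only [mem_sigma, mem_univ, true_and, mem_product, shiftPairs, mem_filter] at hp hp'
    simp only [Prod.mk.injEq] at h
    obtain ⟨rfl, rfl, -⟩ := h
    obtain rfl : u = u' := Units.ext (by linear_combination hp'.1.2.2 - hp.1.2.2)
    obtain rfl : v = v' := Units.ext (by linear_combination hp'.2.2.2 - hp.2.2.2)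
    rw [← hp.1.1, ← hp'.1.1]
  · rintro ⟨a, b, t⟩ hx
    simp only [shiftTriples, mem_filter, mem_univ, true_and] at hx
    obtain ⟨⟨ha, hb, ht, h⟩, hac⟩ := hx
    have hu : (a : F) - c ≠ 0 := sub_ne_zero.mpr fun h ↦ hac (Units.ext h)
    have hv : (b : F) - c ≠ 0 := by rintro hv; rw [hv, mul_zero] at h; exact hu h
    have hut : Units.mk0 _ hu = t * Units.mk0 _ hv := Units.ext (by simpa using h)
    refine ⟨⟨(Units.mk0 _ hu : Fˣ ⧸ K), ⟨Units.mk0 _ hu, a⟩, ⟨Units.mk0 _ hv, b⟩⟩,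
      ?_, ?_⟩
    · simp only [mem_sigma, mem_univ, true_and, mem_product, shiftPairs, mem_filter,
        Units.val_mk0, add_sub_cancel]
      refine ⟨⟨ha, trivial⟩, ?_, hb, trivial⟩
      rw [hut, mul_comm, QuotientGroup.mk_mul_of_mem _ ht]
    · simp [hut]

theorem card_filter_shiftTriples_fst_eq [DecidableEq F] [DecidableEq (Fˣ ⧸ K)] (c : Fˣ)
    (C D : Fˣ ⧸ K) :
    #{x ∈ shiftTriples K c C D | x.1 = c} =
      if (c : Fˣ ⧸ K) = C ∧ (c : Fˣ ⧸ K) = D then Nat.card K else 0 := by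
  have mem_iff (x : Fˣ × Fˣ × Fˣ) : x ∈ {x ∈ shiftTriples K c C D | x.1 = c} ↔
      ((c : Fˣ ⧸ K) = C ∧ (c : Fˣ ⧸ K) = D) ∧ x = (c, c, x.2.2) ∧ x.2.2 ∈ K := by
    obtain ⟨a, b, t⟩ := x
    simp only [shiftTriples, mem_filter, mem_univ, true_and, Prod.mk.injEq, and_true]
    constructor
    · rintro ⟨⟨ha, hb, ht, h⟩, rfl⟩
      obtain rfl : b = a := Units.ext <| by
        simpa [sub_eq_zero, t.ne_zero] using h.symm
      exact ⟨⟨ha, hb⟩, ⟨rfl, rfl⟩, ht⟩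
    · rintro ⟨⟨ha, hb⟩, ⟨rfl, rfl⟩, ht⟩
      exact ⟨⟨ha, hb, ht, by ring⟩, rfl⟩
  split_ifs with hcD
  · classical
    rw [Nat.card_eq_fintype_card, Fintype.card_subtype]
    refine card_nbij' (·.2.2) (fun t ↦ (c, c, t)) (fun x hx ↦ ?_) (fun t ht ↦ ?_)
      (fun x hx ↦ ((mem_iff x).1 hx).2.1.symm) (fun _ _ ↦ rfl)
    · simpa using ((mem_iff x).1 hx).2.2
    · exact (mem_iff _).2 ⟨hcD, rfl, by simpa using ht⟩
  · exact card_eq_zero.mpr <| eq_empty_of_forall_notMem fun x hx ↦ hcD ((mem_iff x).1 hx).1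

theorem card_shiftTriples_neg (c : Fˣ) (C D : Fˣ ⧸ K) :
    #(shiftTriples K (-c) C D) = #(shiftTriples K c C D) := by
  -- `a - c = t (b - c)` becomes `a / t + c = t⁻¹ (t b + c)`
  set φ : Fˣ × Fˣ × Fˣ → Fˣ × Fˣ × Fˣ := fun x ↦
    (x.1 * x.2.2⁻¹, x.2.2 * x.2.1, x.2.2⁻¹)
  have mapsTo (c : Fˣ) : Set.MapsTo φ (shiftTriples K c C D) (shiftTriples K (-c) C D) := by
    rintro ⟨a, b, t⟩ hx
    simp only [φ, shiftTriples, coe_filter, mem_univ, true_and, Set.mem_ofPred_eq] at hx ⊢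
    obtain ⟨ha, hb, ht, h⟩ := hx
    refine ⟨by rwa [QuotientGroup.mk_mul_of_mem _ (inv_mem ht)],
      by rwa [mul_comm, QuotientGroup.mk_mul_of_mem _ ht], inv_mem ht, ?_⟩
    simp only [Units.val_mul, Units.val_neg, Units.val_inv_eq_inv_val]
    field_simp
    linear_combination h
  have φ_φ (x) : φ (φ x) = x := by simp [φ]
  have mapsTo_neg : Set.MapsTo φ (shiftTriples K (-c) C D) (shiftTriples K c C D) := by
    simpa using mapsTo (-c)
  exact card_nbij' φ φ mapsTo_neg (mapsTo c) (fun x _ ↦ φ_φ x) (fun x _ ↦ φ_φ x)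

theorem sum_card_shiftPairs_mul_add [Fintype (Fˣ ⧸ K)] [DecidableEq (Fˣ ⧸ K)] (c : Fˣ)
    (C D : Fˣ ⧸ K) :
    ∑ M, #(shiftPairs K c M C) * #(shiftPairs K c M D) +
      (if (c : Fˣ ⧸ K) = C ∧ (c : Fˣ ⧸ K) = D then Nat.card K else 0) =
      #(shiftTriples K c C D) := by
  classical
  rw [sum_card_shiftPairs_mul, ← card_filter_shiftTriples_fst_eq, add_comm,
    card_filter_add_card_filter_not]

noncomputable def cosetCyclotomicMatrix : Matrix (Fˣ ⧸ K) (Fˣ ⧸ K) ℤ :=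
  Matrix.of fun C D ↦ #(shiftPairs K 1 C D)

theorem cosetCyclotomicMatrix_transpose_mul_sub_mul_transpose [Fintype (Fˣ ⧸ K)]
    [DecidableEq (Fˣ ⧸ K)] :
    (cosetCyclotomicMatrix K)ᵀ * cosetCyclotomicMatrix K -
        cosetCyclotomicMatrix K * (cosetCyclotomicMatrix K)ᵀ =
      (Nat.card K : ℤ) •
        (single ((-1 : Fˣ) : Fˣ ⧸ K) ((-1 : Fˣ) : Fˣ ⧸ K) 1 - single 1 1 1) := by
  ext C D
  have h₁ := sum_card_shiftPairs_mul_add K 1 C D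
  have h₂ := sum_card_shiftPairs_mul_add K (-1) C D
  simp only [card_shiftPairs_neg, card_shiftTriples_neg, QuotientGroup.mk_one] at h₁ h₂
  simp only [cosetCyclotomicMatrix, Matrix.sub_apply, mul_apply, transpose_apply, of_apply,
    Matrix.smul_apply, single_apply, smul_eq_mul]
  zify at h₁ h₂
  split_ifs at h₁ h₂ ⊢ <;> linarith

end CosetCyclotomy

section PowCosets

variable {G : Type*} [CommGroup G]

theorem coe_eq_coe_iff_exists_pow (ℓ : ℕ) (u a : G) :
    (u : G ⧸ (powMonoidHom ℓ : G →* G).range) = a ↔ ∃ y, u = a * y ^ ℓ := by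
  rw [eq_comm, QuotientGroup.eq]
  simp only [MonoidHom.mem_range, powMonoidHom_apply, eq_inv_mul_iff_mul_eq, eq_comm (a := u)]

theorem coe_pow_mod (ℓ n : ℕ) (x : G) :
    ((x ^ (n % ℓ) : G) : G ⧸ (powMonoidHom ℓ : G →* G).range) = (x ^ n : G) := by
  rw [eq_comm, coe_eq_coe_iff_exists_pow]
  exact ⟨x ^ (n / ℓ), by rw [← pow_mul, ← pow_add, mul_comm, Nat.mod_add_div]⟩

theorem bijective_pow_coe [Finite G] {g : G} (hg : ∀ x, x ∈ Subgroup.zpowers g) {ℓ : ℕ}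
    [NeZero ℓ] (hℓ : ℓ ∣ Nat.card G) :
    Function.Bijective
      fun i : Fin ℓ ↦ ((g ^ (i : ℕ) : G) : G ⧸ (powMonoidHom ℓ : G →* G).range) := by
  have : IsCyclic G := ⟨⟨g, fun x ↦ Subgroup.mem_zpowers_iff.mp (hg x)⟩⟩
  refine (Nat.bijective_iff_surjective_and_card _).mpr ⟨?_, ?_⟩
  · rintro ⟨x⟩
    obtain ⟨n, rfl⟩ := mem_powers_iff_mem_zpowers.mpr (hg x)
    exact ⟨Fin.ofNat ℓ n, coe_pow_mod ℓ n g⟩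
  · rw [Nat.card_eq_fintype_card, Fintype.card_fin, ← Subgroup.index_eq_card,
      IsCyclic.index_powMonoidHom_range, Nat.gcd_eq_right hℓ]

end PowCosets

theorem pow_card_sub_one_div_two_eq_neg_one {F : Type*} [Field F] [Fintype F] {g : Fˣ}
    (hg : ∀ x, x ∈ Subgroup.zpowers g) (hodd : Odd (Fintype.card F)) :
    g ^ ((Fintype.card F - 1) / 2) = -1 := by
  have hq : 2 ≤ Fintype.card F := Fintype.one_lt_card
  have hg' : IsPrimitiveRoot g (Fintype.card F - 1) := by
    rw [← Nat.card_eq_fintype_card, ← Nat.card_units,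
      ← orderOf_eq_card_of_forall_mem_zpowers hg]
    exact IsPrimitiveRoot.orderOf g
  have h2 : 2 ∣ Fintype.card F - 1 := (Nat.Odd.sub_odd hodd odd_one).two_dvd
  have h := hg'.pow_of_dvd (Nat.div_ne_zero_iff_of_dvd h2 |>.mpr ⟨by omega, two_ne_zero⟩)
    (Nat.div_dvd_of_dvd h2)
  rw [Nat.div_div_self h2 (by omega)] at h
  exact Units.ext (by simpa using (IsPrimitiveRoot.coe_units_iff.mpr h).eq_neg_one_of_two_right)

theorem ofNat_mul_div_two_eq_zero_iff {ℓ k : ℕ} [NeZero ℓ] (h : Even (ℓ * k)) :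
    Fin.ofNat ℓ (ℓ * k / 2) = 0 ↔ Even k := by
  rw [Fin.ext_iff, Fin.val_ofNat, Fin.val_zero, ← Nat.dvd_iff_mod_eq_zero]
  constructor
  · rintro ⟨m, hm⟩
    refine ⟨m, Nat.eq_of_mul_eq_mul_left (Nat.pos_of_neZero ℓ) ?_⟩
    rw [← Nat.div_mul_cancel (even_iff_two_dvd.mp h), hm]
    ring
  · rintro ⟨m, rfl⟩
    exact ⟨m, by rw [← two_mul, mul_left_comm, Nat.mul_div_cancel_left _ two_pos]⟩

namespace Matrix

theorem submatrix_transpose_mul_sub_mul_transpose {m n R : Type*} [Fintype m] [Fintype n]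
    [NonUnitalNonAssocRing R] (M : Matrix n n R) (e : m ≃ n) :
    (M.submatrix e e)ᵀ * M.submatrix e e - M.submatrix e e * (M.submatrix e e)ᵀ =
      (Mᵀ * M - M * Mᵀ).submatrix e e := by
  rw [transpose_submatrix, submatrix_mul_equiv, submatrix_mul_equiv]
  rfl

theorem single_one_sub_single_one_eq_zero_iff {n R : Type*} [DecidableEq n] [NonAssocRing R]
    [Nontrivial R] (i j : n) :
    single i i (1 : R) - single j j 1 = 0 ↔ i = j := by
  refine ⟨fun h ↦ ?_, fun h ↦ h ▸ sub_self _⟩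
  by_contra hij
  exact one_ne_zero (α := R) <| by
    simpa [single_apply, Ne.symm hij] using congrFun (congrFun h i) i

end Matrix

section CyclotomicMatrix

open Finset

variable {F : Type*} [Field F] [Fintype F]

theorem cyc_eq_card_shiftPairs (g : Fˣ) (ℓ : ℕ) (i j : ℤ) :
    cyc g ℓ i j =
      #(shiftPairs (powMonoidHom ℓ : Fˣ →* Fˣ).range 1 ↑(g ^ i) ↑(g ^ j)) := by
  classical
  set P := shiftPairs (powMonoidHom ℓ : Fˣ →* Fˣ).range 1 ↑(g ^ i) ↑(g ^ j)
  have hinj : Set.InjOn (fun p : Fˣ × Fˣ ↦ (p.2 : F)) P := by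
    rintro ⟨u, w⟩ hp ⟨u', w'⟩ hp' (h : (w : F) = w')
    simp only [P, shiftPairs, coe_filter, mem_univ, true_and, Set.mem_ofPred_eq] at hp hp'
    obtain rfl := Units.ext h
    obtain rfl : u = u' := Units.ext (by linear_combination hp'.2.2 - hp.2.2)
    rfl
  rw [← card_image_of_injOn hinj, ← Nat.card_eq_finsetCard, cyc]
  refine Nat.card_congr (Equiv.subtypeEquivRight fun x ↦ ?_)
  simp only [P, shiftPairs, mem_image, mem_filter, mem_univ, true_and, coe_eq_coe_iff_exists_pow,
    Prod.exists, Units.val_one]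
  constructor
  · rintro ⟨⟨y, hy⟩, z, hz⟩
    exact ⟨_, _, ⟨⟨y, rfl⟩, ⟨z, rfl⟩, hz ▸ hy⟩, hz.symm⟩
  · rintro ⟨u, w, ⟨⟨y, rfl⟩, ⟨z, rfl⟩, h⟩, rfl⟩
    exact ⟨⟨y, h⟩, z, rfl⟩

theorem cycMatrix_eq_submatrix (g : Fˣ) (ℓ : ℕ) :
    cycMatrix g ℓ = (cosetCyclotomicMatrix (powMonoidHom ℓ : Fˣ →* Fˣ).range).submatrix
      (fun i : Fin ℓ ↦ (g ^ (i : ℕ) : Fˣ)) (fun j : Fin ℓ ↦ (g ^ (j : ℕ) : Fˣ)) := by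
  ext i j
  simp [cycMatrix, cosetCyclotomicMatrix, cyc_eq_card_shiftPairs]

end CyclotomicMatrix

theorem cycMatrix_almost_normal {F : Type*} [Field F] [Fintype F] (g : Fˣ) (ℓ : ℕ)
    [NeZero ℓ] (hg : ∀ x : Fˣ, x ∈ Subgroup.zpowers g)
    (hodd : Odd (Fintype.card F)) (hℓ : ℓ ∣ Fintype.card F - 1)
    (k : ℕ) (hk : k = (Fintype.card F - 1) / ℓ)
    (q' : Fin ℓ) (hq' : q' = (Fin.ofNat ℓ ((Fintype.card F - 1) / 2 : ℕ) : Fin ℓ))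
    (A : Matrix (Fin ℓ) (Fin ℓ) ℤ) (hA : A = cycMatrix g ℓ) :
    Aᵀ * A - A * Aᵀ =
      (k : ℤ) • (Matrix.single q' q' 1 - Matrix.single 0 0 1) ∧
    (Aᵀ * A = A * Aᵀ ↔ Even k) := by
  classical
  have hℓ' : ℓ ∣ Nat.card Fˣ := by rwa [Nat.card_units, Nat.card_eq_fintype_card]
  have hK : Nat.card (powMonoidHom ℓ : Fˣ →* Fˣ).range = k := by
    rw [IsCyclic.card_powMonoidHom_range, Nat.gcd_eq_right hℓ', Nat.card_units,
      Nat.card_eq_fintype_card, hk]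
  set e := Equiv.ofBijective _ (bijective_pow_coe (ℓ := ℓ) hg hℓ')
  have he₀ : e.symm 1 = 0 := e.symm_apply_eq.mpr (by simp [e])
  have he₁ : e.symm ((-1 : Fˣ) : Fˣ ⧸ _) = q' := by
    rw [e.symm_apply_eq, hq', Equiv.ofBijective_apply, Fin.val_ofNat, coe_pow_mod,
      pow_card_sub_one_div_two_eq_neg_one hg hodd]
  have hcomm : Aᵀ * A - A * Aᵀ = (k : ℤ) • (single q' q' 1 - single 0 0 1) := by
    have hAe : A = (cosetCyclotomicMatrix (powMonoidHom ℓ : Fˣ →* Fˣ).range).submatrix e e :=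
      hA.trans (cycMatrix_eq_submatrix g ℓ)
    rw [hAe, submatrix_transpose_mul_sub_mul_transpose,
      cosetCyclotomicMatrix_transpose_mul_sub_mul_transpose, hK]
    ext i j
    simp only [submatrix_apply, Matrix.smul_apply, Matrix.sub_apply, single_apply, ← he₀,
      ← he₁, Equiv.symm_apply_eq]
  refine ⟨hcomm, ?_⟩
  have hk₀ : (k : ℤ) ≠ 0 := by rw [← hK]; exact_mod_cast Nat.card_pos.ne'
  have hℓk : ℓ * k = Fintype.card F - 1 := by rw [hk, Nat.mul_div_cancel' hℓ]
  rw [← sub_eq_zero, hcomm, smul_eq_zero, or_iff_right hk₀,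
    single_one_sub_single_one_eq_zero_iff, hq', ← hℓk,
    ofNat_mul_div_two_eq_zero_iff (hℓk ▸ Nat.Odd.sub_odd hodd odd_one)]
end

section
/- The trace of the square of the cyclotomic matrix A satisfies tr(A²) = k(k-1) + q - 2k if k is even, and tr(A²) = k(k-1) if k is odd, where k = (q-1)/ℓ. -/
/-!
Since the cosets `g^i K` (`0 ≤ i < ℓ`) partition `F^×`, the sum `tr(A²) = ∑ (i,j)(j,i)` counts the
pairs `(x, w)` of nonzero elements with `(x - 1)/w ∈ K` and `(w - 1)/x ∈ K`.
Off the line `x + w = 1` these pairs correspond to the `(s, t) ∈ K' × K'` with `st ≠ 1`,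
where `K' = K \ {-1}`, via `x - 1 = s w`, `w - 1 = t x`, i.e. `x = (1 + s)/(1 - st)`,
`w = (1 + t)/(1 - st)`; closure of `K'` under inversion makes their number `|K'| (|K'| - 1)`.
On the line, `(x - 1)/w = -1`, so there are `q - 2` pairs if `-1 ∈ K` and none otherwise.
Finally `K` is the kernel of `z ↦ z^k` in the cyclic group `F^×`, so `-1 ∈ K` iff `k` is even.
-/

open Matrix

open Finset Subgroup

section CyclicGroup

variable {G : Type*} [CommGroup G]

theorem IsCyclic.range_powMonoidHom_eq_ker [IsCyclic G] [Finite G] {d : ℕ}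
    (hd : d ∣ Nat.card G) :
    (powMonoidHom d : G →* G).range = (powMonoidHom (Nat.card G / d)).ker := by
  refine eq_of_le_of_card_ge ?_ ?_
  · rintro _ ⟨z, rfl⟩
    simp [← pow_mul, Nat.mul_div_cancel' hd, pow_card_eq_one']
  · rw [IsCyclic.card_powMonoidHom_ker, IsCyclic.card_powMonoidHom_range, Nat.gcd_eq_right hd,
      Nat.gcd_eq_right (Nat.div_dvd_of_dvd hd)]

variable {g : G} {ℓ : ℕ}

theorem zpow_mem_range_powMonoidHom_iff (hg : ∀ x, x ∈ zpowers g) (hℓ : ℓ ∣ orderOf g) (m : ℤ) :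
    g ^ m ∈ (powMonoidHom ℓ : G →* G).range ↔ (ℓ : ℤ) ∣ m := by
  constructor
  · rintro ⟨z, hz⟩
    obtain ⟨a, rfl⟩ := hg z
    have hone : g ^ (m - a * ℓ) = 1 := by
      rw [_root_.zpow_sub, ← hz, _root_.zpow_mul, zpow_natCast, powMonoidHom_apply, mul_inv_cancel]
    have hdvd := (Int.natCast_dvd_natCast.mpr hℓ).trans (orderOf_dvd_iff_zpow_eq_one.mpr hone)
    simpa using dvd_add hdvd (dvd_mul_left (ℓ : ℤ) a)
  · rintro ⟨a, rfl⟩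
    exact ⟨g ^ a, by simp [← zpow_natCast, ← _root_.zpow_mul, mul_comm]⟩

theorem exists_eq_pow_mul_pow [Finite G] (hg : ∀ x, x ∈ zpowers g) (hℓ : 0 < ℓ) (u : G) :
    ∃ i : Fin ℓ, ∃ z : G, u = g ^ (i : ℕ) * z ^ ℓ := by
  obtain ⟨n, rfl⟩ := (mem_powers_iff_mem_zpowers.mpr (hg u))
  exact ⟨⟨n % ℓ, Nat.mod_lt n hℓ⟩, g ^ (n / ℓ), by
    rw [← pow_mul, ← pow_add, mul_comm, Nat.mod_add_div]⟩

theorem eq_of_pow_mul_pow_eq (hg : ∀ x, x ∈ zpowers g) (hℓ : ℓ ∣ orderOf g) {i i' : Fin ℓ}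
    {z z' : G} (h : g ^ (i : ℕ) * z ^ ℓ = g ^ (i' : ℕ) * z' ^ ℓ) : i = i' := by
  have hmem : g ^ ((i : ℤ) - (i' : ℕ)) ∈ (powMonoidHom ℓ : G →* G).range :=
    ⟨z' / z, by
      rw [powMonoidHom_apply, div_pow, _root_.zpow_sub, zpow_natCast, zpow_natCast,
        ← div_eq_mul_inv, div_eq_div_iff_mul_eq_mul, mul_comm, h, mul_comm]⟩
  have := Int.eq_zero_of_abs_lt_dvd ((zpow_mem_range_powMonoidHom_iff hg hℓ _).mp hmem)
    (by rw [abs_lt]; omega)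
  exact Fin.ext (by omega)

end CyclicGroup

theorem card_filter_mul_ne_one {G₀ : Type*} [GroupWithZero G₀] [DecidableEq G₀] {S : Finset G₀}
    (h0 : (0 : G₀) ∉ S) (hinv : ∀ s ∈ S, s⁻¹ ∈ S) :
    #((S ×ˢ S).filter fun p : G₀ × G₀ => p.1 * p.2 ≠ 1) = #S * (#S - 1) := by
  have hone : #((S ×ˢ S).filter fun p : G₀ × G₀ => p.1 * p.2 = 1) = #S := by
    refine card_nbij' Prod.fst (fun s => (s, s⁻¹)) ?_ ?_ ?_ ?_
    · intro p hp
      simp only [coe_filter, mem_product, Set.mem_ofPred_eq] at hp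
      exact hp.1.1
    · intro s hs
      simp only [coe_filter, mem_product, Set.mem_ofPred_eq]
      exact ⟨⟨hs, hinv s hs⟩, mul_inv_cancel₀ (ne_of_mem_of_not_mem hs h0)⟩
    · intro p hp
      simp only [coe_filter, Set.mem_ofPred_eq] at hp
      exact Prod.ext rfl (inv_eq_of_mul_eq_one_right hp.2)
    · intro s _
      rfl
  have hsplit := card_filter_add_card_filter_not (s := S ×ˢ S) fun p : G₀ × G₀ => p.1 * p.2 = 1
  rw [hone, card_product] at hsplit
  simp only [ne_eq]
  rw [Nat.mul_sub_one]
  omega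

section Field

variable {F : Type*} [Field F]

theorem sub_one_eq_mul_and_sub_one_eq_mul_iff {s t x w : F}
    (hd : 1 - s * t ≠ 0) :
    (x - 1 = s * w ∧ w - 1 = t * x) ↔
      x = (1 + s) / (1 - s * t) ∧ w = (1 + t) / (1 - s * t) := by
  constructor
  · rintro ⟨h₁, h₂⟩
    rw [eq_div_iff hd, eq_div_iff hd]
    exact ⟨by linear_combination h₁ + s * h₂, by linear_combination h₂ + t * h₁⟩
  · rintro ⟨rfl, rfl⟩
    simp only [div_sub_one hd, mul_div_assoc', div_left_inj' hd]
    constructor <;> ring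

theorem ne_zero_and_add_ne_one_iff {s t x w : F} (h₁ : x - 1 = s * w) (h₂ : w - 1 = t * x) :
    (x ≠ 0 ∧ w ≠ 0 ∧ x + w ≠ 1) ↔ (s ≠ -1 ∧ t ≠ -1 ∧ s * t ≠ 1) := by
  constructor
  · rintro ⟨hx, hw, hxw⟩
    refine ⟨?_, ?_, fun hst => hxw ?_⟩
    · rintro rfl
      exact hxw (by linear_combination h₁)
    · rintro rfl
      exact hxw (by linear_combination h₂)
    · linear_combination -(w - 1) * h₁ - s * w * h₂ - w * x * hst
  · rintro ⟨hs, ht, hst⟩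
    have hx : x ≠ 0 := by
      rintro rfl
      exact hs (by linear_combination -h₁ - s * h₂)
    have hw : w ≠ 0 := by
      rintro rfl
      exact ht (by linear_combination -h₂ - t * h₁)
    refine ⟨hx, hw, fun hxw => hw ?_⟩
    have : (s + 1) * w = 0 := by linear_combination -h₁ + hxw
    exact (mul_eq_zero.mp this).resolve_left fun h => hs (by linear_combination h)

variable {g : Fˣ} {ℓ : ℕ}

variable (g ℓ) in
def unitCoset (i : ℕ) : Set F := {x | ∃ z : Fˣ, x = ((g ^ i * z ^ ℓ : Fˣ) : F)}

theorem ne_zero_of_mem_unitCoset {i : ℕ} {x : F} (hx : x ∈ unitCoset g ℓ i) : x ≠ 0 := by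
  obtain ⟨z, rfl⟩ := hx
  exact Units.ne_zero _

variable [Fintype F]

theorem cyc_eq_card (i j : ℕ) :
    cyc g ℓ i j = Nat.card {x : F // x - 1 ∈ unitCoset g ℓ i ∧ x ∈ unitCoset g ℓ j} := by
  simp only [cyc, unitCoset, Set.mem_ofPred_eq, zpow_natCast, sub_eq_iff_eq_add']

theorem exists_mem_unitCoset (hg : ∀ x : Fˣ, x ∈ zpowers g) (hℓ : 0 < ℓ) {x : F}
    (hx : x ≠ 0) : ∃ i : Fin ℓ, x ∈ unitCoset g ℓ i := by
  obtain ⟨i, z, hz⟩ := exists_eq_pow_mul_pow hg hℓ (Units.mk0 x hx)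
  exact ⟨i, z, by rw [← hz, Units.val_mk0]⟩

theorem eq_of_mem_unitCoset (hg : ∀ x : Fˣ, x ∈ zpowers g)
    (hℓ : ℓ ∣ Fintype.card F - 1) {i i' : Fin ℓ} {x : F} (hi : x ∈ unitCoset g ℓ i)
    (hi' : x ∈ unitCoset g ℓ i') : i = i' := by
  obtain ⟨z, rfl⟩ := hi
  obtain ⟨z', hz'⟩ := hi'
  refine eq_of_pow_mul_pow_eq hg ?_ (Units.val_injective hz')
  rwa [orderOf_eq_card_of_forall_mem_zpowers hg, Nat.card_units, Nat.card_eq_fintype_card]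

variable [DecidableEq F]

variable (ℓ) in
def unitPowers : Finset F := univ.image fun z : Fˣ => (z : F) ^ ℓ

@[simp]
theorem mem_unitPowers {x : F} : x ∈ unitPowers ℓ ↔ ∃ z : Fˣ, (z : F) ^ ℓ = x := by
  simp [unitPowers]

theorem ne_zero_of_mem_unitPowers {x : F} (hx : x ∈ unitPowers ℓ) : x ≠ 0 := by
  obtain ⟨z, rfl⟩ := mem_unitPowers.mp hx
  exact pow_ne_zero _ z.ne_zero

theorem inv_mem_unitPowers {x : F} (hx : x ∈ unitPowers ℓ) : x⁻¹ ∈ unitPowers ℓ := by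
  obtain ⟨z, rfl⟩ := mem_unitPowers.mp hx
  exact mem_unitPowers.mpr ⟨z⁻¹, by simp⟩

theorem card_unitPowers (hℓ : ℓ ∣ Fintype.card F - 1) :
    #(unitPowers ℓ : Finset F) = (Fintype.card F - 1) / ℓ := by
  have hcard : Nat.card Fˣ = Fintype.card F - 1 := by
    rw [Nat.card_units, Nat.card_eq_fintype_card]
  have : (unitPowers ℓ : Finset F) = (univ.image (powMonoidHom ℓ : Fˣ →* Fˣ)).map
      ⟨Units.val, Units.val_injective⟩ := by
    ext; simp [unitPowers]
  rw [this, card_map, ← Set.toFinset_range, ← Set.ncard_eq_toFinset_card', ← MonoidHom.coe_range,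
    ← Nat.card_coe_set_eq, SetLike.coe_sort_coe, IsCyclic.card_powMonoidHom_range, hcard,
    Nat.gcd_eq_right hℓ]

theorem neg_one_mem_unitPowers_iff (hodd : Odd (Fintype.card F)) (hℓ : ℓ ∣ Fintype.card F - 1) :
    (-1 : F) ∈ unitPowers ℓ ↔ Even ((Fintype.card F - 1) / ℓ) := by
  have hcard : Nat.card Fˣ = Fintype.card F - 1 := by
    rw [Nat.card_units, Nat.card_eq_fintype_card]
  have hne : (-1 : Fˣ) ≠ 1 := by
    have hchar : ringChar F ≠ 2 := fun h => by
      have := FiniteField.even_card_of_char_two h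
      rw [Nat.odd_iff] at hodd
      omega
    simpa [Units.ext_iff] using Ring.neg_one_ne_one_of_char_ne_two hchar
  calc (-1 : F) ∈ unitPowers ℓ ↔ (-1 : Fˣ) ∈ (powMonoidHom ℓ : Fˣ →* Fˣ).range := by
        simp [Units.ext_iff]
    _ ↔ (-1 : Fˣ) ∈ (powMonoidHom (Nat.card Fˣ / ℓ) : Fˣ →* Fˣ).ker := by
        rw [IsCyclic.range_powMonoidHom_eq_ker (hcard ▸ hℓ)]
    _ ↔ Even ((Fintype.card F - 1) / ℓ) := by
        rw [MonoidHom.mem_ker, powMonoidHom_apply, neg_one_pow_eq_one_iff_even hne, hcard]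

theorem mem_unitCoset_iff_div_mem {i : ℕ} {x y : F} (hx : x ∈ unitCoset g ℓ i) :
    y ∈ unitCoset g ℓ i ↔ y / x ∈ unitPowers ℓ := by
  obtain ⟨z, rfl⟩ := hx
  constructor
  · rintro ⟨z', rfl⟩
    refine mem_unitPowers.mpr ⟨z' / z, ?_⟩
    push_cast
    rw [mul_div_mul_left _ _ (pow_ne_zero _ g.ne_zero), div_pow]
  · intro h
    obtain ⟨s, hs⟩ := mem_unitPowers.mp h
    refine ⟨z * s, ?_⟩
    rw [eq_div_iff (Units.ne_zero _)] at hs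
    rw [← hs]
    push_cast
    ring

variable (ℓ) in
def cycPairs : Finset (F × F) :=
  univ.filter fun p => p.1 ≠ 0 ∧ p.2 ≠ 0 ∧
    (p.1 - 1) / p.2 ∈ unitPowers ℓ ∧ (p.2 - 1) / p.1 ∈ unitPowers ℓ

theorem sum_cyc_mul_cyc (hg : ∀ x : Fˣ, x ∈ zpowers g) (hℓ : ℓ ∣ Fintype.card F - 1) :
    ∑ i : Fin ℓ, ∑ j : Fin ℓ, cyc g ℓ (i : ℕ) (j : ℕ) * cyc g ℓ (j : ℕ) (i : ℕ) =
      #(cycPairs ℓ : Finset (F × F)) := by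
  classical
  have hpos : 0 < ℓ :=
    Nat.pos_of_dvd_of_pos hℓ (Nat.sub_pos_of_lt Fintype.one_lt_card)
  set S : Fin ℓ × Fin ℓ → Finset (F × F) := fun ij => univ.filter fun p =>
    (p.1 - 1 ∈ unitCoset g ℓ ij.1 ∧ p.1 ∈ unitCoset g ℓ ij.2) ∧
      (p.2 - 1 ∈ unitCoset g ℓ ij.2 ∧ p.2 ∈ unitCoset g ℓ ij.1) with hS
  have hprod (i j : Fin ℓ) : cyc g ℓ (i : ℕ) (j : ℕ) * cyc g ℓ (j : ℕ) (i : ℕ) = #(S (i, j)) := by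
    rw [cyc_eq_card, cyc_eq_card, Nat.card_eq_fintype_card, Nat.card_eq_fintype_card,
      Fintype.card_subtype, Fintype.card_subtype, ← card_product, ← filter_product,
      univ_product_univ]
  have hdisj : ((univ : Finset (Fin ℓ × Fin ℓ)) : Set (Fin ℓ × Fin ℓ)).PairwiseDisjoint S := by
    rintro ⟨i, j⟩ - ⟨i', j'⟩ - hne
    refine disjoint_left.mpr fun p hp hp' => hne ?_
    simp only [hS, mem_filter, mem_univ, true_and] at hp hp'
    exact Prod.ext (eq_of_mem_unitCoset hg hℓ hp.2.2 hp'.2.2)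
      (eq_of_mem_unitCoset hg hℓ hp.1.2 hp'.1.2)
  have hunion : univ.biUnion S = cycPairs ℓ := by
    ext ⟨x, w⟩
    simp only [hS, cycPairs, mem_biUnion, mem_filter, mem_univ, true_and, Prod.exists]
    constructor
    · rintro ⟨i, j, ⟨hx1, hx⟩, hw1, hw⟩
      exact ⟨ne_zero_of_mem_unitCoset hx, ne_zero_of_mem_unitCoset hw,
        (mem_unitCoset_iff_div_mem hw).mp hx1, (mem_unitCoset_iff_div_mem hx).mp hw1⟩
    · rintro ⟨hx, hw, hx1, hw1⟩
      obtain ⟨i, hi⟩ := exists_mem_unitCoset hg hpos hw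
      obtain ⟨j, hj⟩ := exists_mem_unitCoset hg hpos hx
      exact ⟨i, j, ⟨(mem_unitCoset_iff_div_mem hi).mpr hx1, hj⟩,
        (mem_unitCoset_iff_div_mem hj).mpr hw1, hi⟩
  rw [← hunion, card_biUnion hdisj, ← univ_product_univ, sum_product]
  simp only [hprod]

theorem card_cycPairs_filter_add_eq_one :
    #((cycPairs ℓ).filter fun p : F × F => p.1 + p.2 = 1) =
      if (-1 : F) ∈ unitPowers ℓ then Fintype.card F - 2 else 0 := by
  have hline : ∀ x w : F, w ≠ 0 → x + w = 1 → (x - 1) / w = -1 := fun x w hw h => by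
    rw [show x - 1 = -w by linear_combination h, neg_div_self hw]
  split_ifs with hK
  · rw [← card_pair (zero_ne_one' F), ← card_compl]
    refine card_nbij' Prod.fst (fun x => (x, 1 - x)) ?_ ?_ ?_ ?_
    · rintro ⟨x, w⟩ hp
      simp only [coe_filter, cycPairs, mem_filter, mem_univ, true_and, Set.mem_ofPred_eq] at hp
      simp only [coe_compl, coe_pair, Set.mem_compl_iff, Set.mem_insert_iff,
        Set.mem_singleton_iff, not_or]
      exact ⟨hp.1.1, fun hx => hp.1.2.1 (by linear_combination hp.2 - hx)⟩
    · intro x hx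
      simp only [coe_compl, coe_pair, Set.mem_compl_iff, Set.mem_insert_iff,
        Set.mem_singleton_iff, not_or] at hx
      have hw : 1 - x ≠ 0 := sub_ne_zero.mpr (Ne.symm hx.2)
      simp only [coe_filter, cycPairs, mem_filter, mem_univ, true_and, Set.mem_ofPred_eq]
      refine ⟨⟨hx.1, hw, by rwa [hline x _ hw (by ring)], ?_⟩, by ring⟩
      rwa [hline (1 - x) x hx.1 (by ring)]
    · rintro ⟨x, w⟩ hp
      simp only [coe_filter, Set.mem_ofPred_eq] at hp
      simp only [Prod.mk.injEq, true_and]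
      linear_combination -hp.2
    · intro x _
      rfl
  · refine card_eq_zero.mpr (filter_eq_empty_iff.mpr ?_)
    rintro ⟨x, w⟩ hp hxw
    simp only [cycPairs, mem_filter, mem_univ, true_and] at hp
    exact hK (hline x w hp.2.1 hxw ▸ hp.2.2.1)

theorem card_cycPairs_filter_add_ne_one :
    #((cycPairs ℓ).filter fun p : F × F => p.1 + p.2 ≠ 1) =
      #((((unitPowers ℓ).erase (-1)) ×ˢ ((unitPowers ℓ).erase (-1))).filter
        fun p : F × F => p.1 * p.2 ≠ 1) := by
  have solution {s t : F} (hs : s ≠ -1) (ht : t ≠ -1) (hst : s * t ≠ 1) :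
      (1 + s) / (1 - s * t) ≠ 0 ∧ (1 + t) / (1 - s * t) ≠ 0 ∧
        (1 + s) / (1 - s * t) + (1 + t) / (1 - s * t) ≠ 1 ∧
        ((1 + s) / (1 - s * t) - 1) / ((1 + t) / (1 - s * t)) = s ∧
        ((1 + t) / (1 - s * t) - 1) / ((1 + s) / (1 - s * t)) = t := by
    obtain ⟨h₁, h₂⟩ :=
      (sub_one_eq_mul_and_sub_one_eq_mul_iff (sub_ne_zero.mpr hst.symm)).mpr ⟨rfl, rfl⟩
    obtain ⟨hx, hw, hxw⟩ := (ne_zero_and_add_ne_one_iff h₁ h₂).mpr ⟨hs, ht, hst⟩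
    exact ⟨hx, hw, hxw, by rw [h₁, mul_div_cancel_right₀ _ hw],
      by rw [h₂, mul_div_cancel_right₀ _ hx]⟩
  refine card_nbij' (fun p => ((p.1 - 1) / p.2, (p.2 - 1) / p.1))
    (fun p => ((1 + p.1) / (1 - p.1 * p.2), (1 + p.2) / (1 - p.1 * p.2))) ?_ ?_ ?_ ?_
  · rintro ⟨x, w⟩ hp
    simp only [coe_filter, cycPairs, mem_filter, mem_univ, true_and, Set.mem_ofPred_eq] at hp
    obtain ⟨⟨hx, hw, hs, ht⟩, hxw⟩ := hp
    obtain ⟨hs', ht', hst⟩ := (ne_zero_and_add_ne_one_iff (div_mul_cancel₀ _ hw).symm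
      (div_mul_cancel₀ _ hx).symm).mp ⟨hx, hw, hxw⟩
    simp only [coe_filter, mem_product, mem_erase, Set.mem_ofPred_eq]
    exact ⟨⟨⟨hs', hs⟩, ht', ht⟩, hst⟩
  · rintro ⟨s, t⟩ hp
    simp only [coe_filter, mem_product, mem_erase, Set.mem_ofPred_eq] at hp
    obtain ⟨⟨⟨hs, hsK⟩, ht, htK⟩, hst⟩ := hp
    obtain ⟨hx, hw, hxw, h₁, h₂⟩ := solution hs ht hst
    simp only [coe_filter, cycPairs, mem_filter, mem_univ, true_and, Set.mem_ofPred_eq]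
    exact ⟨⟨hx, hw, by rwa [h₁], by rwa [h₂]⟩, hxw⟩
  · rintro ⟨x, w⟩ hp
    simp only [coe_filter, cycPairs, mem_filter, mem_univ, true_and, Set.mem_ofPred_eq] at hp
    obtain ⟨⟨hx, hw, -, -⟩, hxw⟩ := hp
    have h₁ := (div_mul_cancel₀ (x - 1) hw).symm
    have h₂ := (div_mul_cancel₀ (w - 1) hx).symm
    obtain ⟨-, -, hst⟩ := (ne_zero_and_add_ne_one_iff h₁ h₂).mp ⟨hx, hw, hxw⟩
    obtain ⟨hx', hw'⟩ :=
      (sub_one_eq_mul_and_sub_one_eq_mul_iff (sub_ne_zero.mpr hst.symm)).mp ⟨h₁, h₂⟩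
    exact Prod.ext hx'.symm hw'.symm
  · rintro ⟨s, t⟩ hp
    simp only [coe_filter, mem_product, mem_erase, Set.mem_ofPred_eq] at hp
    obtain ⟨⟨⟨hs, -⟩, ht, -⟩, hst⟩ := hp
    obtain ⟨-, -, -, h₁, h₂⟩ := solution hs ht hst
    exact Prod.ext h₁ h₂

theorem card_cycPairs :
    #(cycPairs ℓ : Finset (F × F)) =
      #((unitPowers ℓ : Finset F).erase (-1)) * (#((unitPowers ℓ : Finset F).erase (-1)) - 1) +
        if (-1 : F) ∈ unitPowers ℓ then Fintype.card F - 2 else 0 := by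
  have h0 : (0 : F) ∉ (unitPowers ℓ).erase (-1) := fun h =>
    ne_zero_of_mem_unitPowers (mem_of_mem_erase h) rfl
  have hinv : ∀ s ∈ (unitPowers ℓ : Finset F).erase (-1), s⁻¹ ∈ (unitPowers ℓ).erase (-1) := by
    intro s hs
    rw [mem_erase] at hs ⊢
    exact ⟨by rw [ne_eq, inv_eq_iff_eq_inv, inv_neg_one]; exact hs.1, inv_mem_unitPowers hs.2⟩
  rw [← card_filter_add_card_filter_not (s := cycPairs ℓ) (fun p : F × F => p.1 + p.2 ≠ 1),
    card_cycPairs_filter_add_ne_one, card_filter_mul_ne_one h0 hinv]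
  simp only [not_not, card_cycPairs_filter_add_eq_one]

end Field

theorem trace_cycMatrix_sq {F : Type*} [Field F] [Fintype F] (g : Fˣ) (ℓ : ℕ)
    (hg : ∀ x : Fˣ, x ∈ Subgroup.zpowers g)
    (hodd : Odd (Fintype.card F)) (hℓ : ℓ ∣ Fintype.card F - 1)
    (k : ℕ) (hk : k = (Fintype.card F - 1) / ℓ)
    (A : Matrix (Fin ℓ) (Fin ℓ) ℤ) (hA : A = cycMatrix g ℓ) :
    Matrix.trace (A * A) =
      if Even k then (k : ℤ) * (k - 1) + Fintype.card F - 2 * k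
      else (k : ℤ) * (k - 1) := by
  classical
  have hq : 2 ≤ Fintype.card F := Fintype.one_lt_card
  have hk0 : k ≠ 0 := by
    rw [hk]
    exact (Nat.div_pos (Nat.le_of_dvd (by omega) hℓ) (Nat.pos_of_dvd_of_pos hℓ (by omega))).ne'
  have htrace : Matrix.trace (A * A) =
      (∑ i : Fin ℓ, ∑ j : Fin ℓ, cyc g ℓ (i : ℕ) (j : ℕ) * cyc g ℓ (j : ℕ) (i : ℕ) : ℕ) := by
    simp [hA, Matrix.trace, Matrix.mul_apply, cycMatrix]
  rw [htrace, sum_cyc_mul_cyc hg hℓ, card_cycPairs]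
  have hK : #(unitPowers ℓ : Finset F) = k := hk ▸ card_unitPowers hℓ
  have hmem : (-1 : F) ∈ unitPowers ℓ ↔ Even k := hk ▸ neg_one_mem_unitPowers_iff hodd hℓ
  by_cases hev : Even k
  · have hk2 : 2 ≤ k := by obtain ⟨c, rfl⟩ := hev; omega
    rw [card_erase_of_mem (hmem.mpr hev), hK, if_pos (hmem.mpr hev), if_pos hev]
    push_cast [Nat.sub_sub, Nat.cast_sub hq, Nat.cast_sub hk2, Nat.cast_sub (by omega : 1 ≤ k)]
    ring
  · rw [erase_eq_of_notMem (mt hmem.mp hev), hK, if_neg (mt hmem.mp hev), if_neg hev]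
    push_cast [Nat.cast_sub (by omega : 1 ≤ k)]
    ring
end

section
/- If K is a (q, k, λ)-difference set, then the cyclotomic matrix A satisfies A^T A = λk J + (k-λ) I - k E_{0,0}, where J is the ℓ×ℓ all-ones matrix, I the identity, E_{0,0} the matrix with a 1 in the (0,0)-entry and zeros elsewhere, and λ = (k-1)/ℓ. -/
open Matrix

/-- The set of `ℓ`-th powers in `Fˣ`, viewed inside `F`. -/
def Kset (F : Type*) [Field F] (ℓ : ℕ) : Set F :=
  {x : F | ∃ y : Fˣ, x = ((y ^ ℓ : Fˣ) : F)}

/-- `H` is a difference set of `(F, +)` with parameter `lam`. -/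
def IsDiffSet {F : Type*} [Field F] (H : Set F) (lam : ℕ) : Prop :=
  ∀ z : F, z ≠ 0 →
    Nat.card {p : F × F // p.1 ∈ H ∧ p.2 ∈ H ∧ p.1 - p.2 = z} = lam

/-!
Let `K ≤ Fˣ` be the subgroup of `ℓ`-th powers, `k = |K|`, and view its cosets `C_β` inside `F`.
Two units lie in a common coset iff they are `a` and `m a` with `m ∈ K`, so the `(β, γ)` entry
of `AᵀA` counts the pairs `(m, a) ∈ K × Fˣ` with `1 + a ∈ C_β` and `1 + m a ∈ C_γ`. The
substitution `w = m (1 + a)` identifies the slice of a fixed `m` (with `a = 0` allowed) with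
`N(1 - m)`, where `N(d) = |{w ∈ C_β | w + d ∈ C_γ}|`. Now `N(0) = k [β = γ]`, `N` is invariant
under `K` and sums to `k²` over `F`, and every nonzero `z` is a difference `x - y = x (1 - y/x)`
of elements of `K` in exactly `λ` ways, so
`k · ∑_{m ≠ 1} N(1 - m) = λ ∑_{d ≠ 0} N(d) = λ (k² - k [β = γ])`.
Removing the `k` terms with `a = 0`, present only when `β = γ = K`, gives the formula.
-/

open Finset
open scoped Classical

theorem sum_card_fiber_mul_card_fiber {α β : Type*} [Fintype α] [Fintype β] [DecidableEq β]
    (f : α → β) (P Q : α → Prop) [DecidablePred P] [DecidablePred Q] :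
    ∑ b, #{a | f a = b ∧ P a} * #{a | f a = b ∧ Q a} =
      #{p : α × α | f p.1 = f p.2 ∧ P p.1 ∧ Q p.2} := by
  rw [card_eq_sum_card_fiberwise (f := fun p => f p.1) (t := univ) fun _ _ => mem_univ _]
  refine sum_congr rfl fun b _ => ?_
  rw [← card_product]
  congr 1
  ext p
  simp only [mem_product, mem_filter, mem_univ, true_and]
  constructor
  · rintro ⟨⟨h1, hP⟩, h2, hQ⟩
    exact ⟨⟨h1.trans h2.symm, hP, hQ⟩, h1⟩
  · rintro ⟨⟨h, hP, hQ⟩, h1⟩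
    exact ⟨⟨h1, hP⟩, h.symm.trans h1, hQ⟩

theorem QuotientGroup.card_mk_eq_mk_eq_sum {G : Type*} [Group G] [Fintype G] (H : Subgroup G)
    [DecidablePred (· ∈ H)] [DecidableEq (G ⧸ H)] (P Q : G → Prop) [DecidablePred P]
    [DecidablePred Q] :
    #{p : G × G | (p.1 : G ⧸ H) = p.2 ∧ P p.1 ∧ Q p.2} = ∑ m : H, #{a | P a ∧ Q (a * m)} := by
  have hsum : ∑ m : H, #{a | P a ∧ Q (a * m)} = #{p : H × G | P p.2 ∧ Q (p.2 * p.1)} := by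
    simp only [card_filter, Fintype.sum_prod_type]
  rw [hsum, eq_comm]
  refine card_nbij (fun p => (p.2, p.2 * p.1)) ?_ ?_ ?_
  · rintro ⟨m, a⟩ h
    simp_all [QuotientGroup.eq]
  · rintro ⟨m, a⟩ - ⟨m', a'⟩ - h
    obtain ⟨rfl, h⟩ := Prod.mk.inj h
    simp_all
  · rintro ⟨a, b⟩ h
    simp only [coe_filter, mem_univ, true_and, Set.mem_ofPred_eq, QuotientGroup.eq] at h
    exact ⟨(⟨_, h.1⟩, a), by simpa using h.2, by simp⟩

theorem card_filter_units_add_ite {M : Type*} [GroupWithZero M] [Fintype M] [DecidableEq M]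
    (R : M → Prop) [DecidablePred R] :
    #{u : Mˣ | R u} + (if R 0 then 1 else 0) = #{x : M | R x} := by
  rw [← card_filter_add_card_filter_not (s := {x : M | R x}) (p := (· ≠ 0)), filter_filter,
    filter_filter]
  congr 1
  · refine card_nbij Units.val ?_ (Units.val_injective.injOn) ?_
    · intro u hu
      simp_all
    · intro x hx
      simp only [coe_filter, mem_univ, true_and, Set.mem_ofPred_eq] at hx
      exact ⟨Units.mk0 x hx.2, by simpa using hx.1, rfl⟩
  · split_ifs with h
    · symm; rw [card_eq_one]; exact ⟨0, by ext; simp; grind⟩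
    · symm; rw [card_eq_zero, filter_eq_empty_iff]; grind

section Cosets

variable {F : Type*} [Field F] [Fintype F] (H : Subgroup Fˣ)

noncomputable def valCoset (β : Fˣ ⧸ H) : Finset F :=
  (univ.filter fun u : Fˣ => (u : Fˣ ⧸ H) = β).map ⟨Units.val, Units.val_injective⟩

variable {H}

theorem mem_valCoset {β : Fˣ ⧸ H} {x : F} :
    x ∈ valCoset H β ↔ ∃ u : Fˣ, (u : Fˣ ⧸ H) = β ∧ (u : F) = x := by
  simp [valCoset]

theorem val_mem_valCoset {β : Fˣ ⧸ H} (u : Fˣ) : (u : F) ∈ valCoset H β ↔ (u : Fˣ ⧸ H) = β := by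
  simp only [mem_valCoset, Units.val_inj]
  exact ⟨fun ⟨_, h, rfl⟩ => h, fun h => ⟨u, h, rfl⟩⟩

theorem zero_notMem_valCoset (β : Fˣ ⧸ H) : (0 : F) ∉ valCoset H β := by
  simp [mem_valCoset]

theorem one_mem_valCoset {β : Fˣ ⧸ H} : (1 : F) ∈ valCoset H β ↔ β = 1 := by
  rw [← Units.val_one, val_mem_valCoset, QuotientGroup.mk_one, eq_comm]

theorem eq_of_mem_valCoset {β γ : Fˣ ⧸ H} {x : F} (hβ : x ∈ valCoset H β)
    (hγ : x ∈ valCoset H γ) : β = γ := by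
  obtain ⟨u, rfl, rfl⟩ := mem_valCoset.mp hβ
  exact (val_mem_valCoset u).mp hγ

theorem mul_mem_valCoset {β : Fˣ ⧸ H} {h : Fˣ} (hh : h ∈ H) {x : F} :
    (h : F) * x ∈ valCoset H β ↔ x ∈ valCoset H β := by
  rcases eq_or_ne x 0 with rfl | hx
  · simp [zero_notMem_valCoset]
  · lift x to Fˣ using hx.isUnit
    rw [← Units.val_mul, val_mem_valCoset, val_mem_valCoset, QuotientGroup.mk_mul,
      (QuotientGroup.eq_one_iff h).mpr hh, one_mul]

theorem card_valCoset (β : Fˣ ⧸ H) : #(valCoset H β) = Nat.card H := by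
  rw [valCoset, card_map, ← mul_one (Nat.card H), ← Nat.card_unique (α := ({β} : Set (Fˣ ⧸ H))),
    ← QuotientGroup.card_preimage_mk H {β}, Nat.card_eq_card_toFinset]
  congr 1
  ext u
  simp

end Cosets

section CyclotomicNumbers

variable {F : Type*} [Field F] [Fintype F] (H : Subgroup Fˣ)

/-- The cyclotomic number `|(1 + β) ∩ γ|`, counted through `a = x - 1 ∈ β`. -/
noncomputable def cycNum (β γ : Fˣ ⧸ H) : ℕ :=
  #{a : Fˣ | (a : Fˣ ⧸ H) = β ∧ 1 + (a : F) ∈ valCoset H γ}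

noncomputable def shiftCount (β γ : Fˣ ⧸ H) (d : F) : ℕ :=
  #{w ∈ valCoset H β | w + d ∈ valCoset H γ}

variable {H}

theorem card_one_add_mem_eq_shiftCount (β γ : Fˣ ⧸ H) {m : Fˣ} (hm : m ∈ H) :
    #{x : F | 1 + x ∈ valCoset H β ∧ 1 + x * m ∈ valCoset H γ} = shiftCount H β γ (1 - m) := by
  refine card_nbij' (fun x => m * (1 + x)) (fun w => w / m - 1) ?_ ?_ ?_ ?_
  · intro x hx
    simp only [coe_filter, mem_univ, true_and, Set.mem_ofPred_eq] at hx ⊢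
    refine ⟨(mul_mem_valCoset hm).mpr hx.1, ?_⟩
    convert hx.2 using 1
    ring
  · intro w hw
    simp only [coe_filter, mem_univ, true_and, Set.mem_ofPred_eq] at hw ⊢
    have hm0 : (m : F) ≠ 0 := m.ne_zero
    refine ⟨?_, ?_⟩
    · rw [← mul_mem_valCoset hm]; convert hw.1 using 1; field_simp; ring
    · convert hw.2 using 1; field_simp; ring
  · intro x _
    simp
  · intro w _
    field_simp
    ring

theorem sum_cycNum_mul_cycNum_add (β γ : Fˣ ⧸ H) :
    ∑ α, cycNum H α β * cycNum H α γ + Nat.card H * (if β = 1 ∧ γ = 1 then 1 else 0) =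
      ∑ m : H, shiftCount H β γ (1 - ((m : Fˣ) : F)) := by
  have hfiber (m : H) :
      #{a : Fˣ | 1 + (a : F) ∈ valCoset H β ∧ 1 + ((a * m : Fˣ) : F) ∈ valCoset H γ}
        + (if β = 1 ∧ γ = 1 then 1 else 0) = shiftCount H β γ (1 - ((m : Fˣ) : F)) := by
    rw [← card_one_add_mem_eq_shiftCount β γ m.2, ← card_filter_units_add_ite (M := F)]
    simp [one_mem_valCoset]
  calc ∑ α, cycNum H α β * cycNum H α γ + Nat.card H * (if β = 1 ∧ γ = 1 then 1 else 0)
      = #{p : Fˣ × Fˣ | (p.1 : Fˣ ⧸ H) = p.2 ∧ 1 + (p.1 : F) ∈ valCoset H β ∧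
          1 + (p.2 : F) ∈ valCoset H γ} + Nat.card H * (if β = 1 ∧ γ = 1 then 1 else 0) := by
        congr 1
        exact sum_card_fiber_mul_card_fiber _ _ _
    _ = ∑ m : H,
          (#{a : Fˣ | 1 + (a : F) ∈ valCoset H β ∧ 1 + ((a * m : Fˣ) : F) ∈ valCoset H γ}
            + (if β = 1 ∧ γ = 1 then 1 else 0)) := by
        rw [sum_add_distrib, sum_const, card_univ, smul_eq_mul, Nat.card_eq_fintype_card]
        congr 1
        exact QuotientGroup.card_mk_eq_mk_eq_sum H (fun a : Fˣ => 1 + (a : F) ∈ valCoset H β)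
          (fun b : Fˣ => 1 + (b : F) ∈ valCoset H γ)
    _ = ∑ m : H, shiftCount H β γ (1 - ((m : Fˣ) : F)) := sum_congr rfl fun m _ => hfiber m

theorem shiftCount_zero (β γ : Fˣ ⧸ H) :
    shiftCount H β γ 0 = Nat.card H * if β = γ then 1 else 0 := by
  rw [mul_ite, mul_one, mul_zero]
  split_ifs with h
  · subst h
    simp [shiftCount, card_valCoset]
  · rw [shiftCount, card_eq_zero, filter_eq_empty_iff]
    intro x hβ hγ
    exact h (eq_of_mem_valCoset hβ (by simpa using hγ))

theorem shiftCount_mul (β γ : Fˣ ⧸ H) {h : Fˣ} (hh : h ∈ H) (d : F) :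
    shiftCount H β γ (h * d) = shiftCount H β γ d := by
  refine card_nbij' (fun w => w / h) (fun w => h * w) ?_ ?_ ?_ ?_
  · intro w hw
    simp only [coe_filter] at hw ⊢
    have h0 : (h : F) ≠ 0 := h.ne_zero
    refine ⟨?_, ?_⟩
    · rw [← mul_mem_valCoset hh]; convert hw.1 using 1; field_simp
    · rw [← mul_mem_valCoset hh]; convert hw.2 using 1; field_simp
  · intro w hw
    simp only [coe_filter] at hw ⊢
    refine ⟨(mul_mem_valCoset hh).mpr hw.1, ?_⟩
    rw [← mul_add]
    exact (mul_mem_valCoset hh).mpr hw.2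
  · intro w _
    field_simp
  · intro w _
    simp

theorem sum_shiftCount (β γ : Fˣ ⧸ H) : ∑ d, shiftCount H β γ d = Nat.card H * Nat.card H := by
  have hfib (w : F) : #{d : F | w + d ∈ valCoset H γ} = Nat.card H := by
    rw [← card_valCoset γ]
    exact card_equiv (Equiv.addLeft w) (by simp)
  calc ∑ d, shiftCount H β γ d
      = ∑ w ∈ valCoset H β, #{d : F | w + d ∈ valCoset H γ} :=
        sum_card_bipartiteAbove_eq_sum_card_bipartiteBelow (fun d w => w + d ∈ valCoset H γ)
    _ = Nat.card H * Nat.card H := by simp only [hfib, sum_const, card_valCoset, smul_eq_mul]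

end CyclotomicNumbers

section DifferenceSet

variable {F : Type*} [Field F] [Fintype F] {H : Subgroup Fˣ}

theorem card_sub_eq_of_isDiffSet {lam : ℕ}
    (hds : IsDiffSet (Units.val '' (H : Set Fˣ)) lam) {z : F} (hz : z ≠ 0) :
    #{p : H × H | ((p.1 : Fˣ) : F) - (p.2 : Fˣ) = z} = lam := by
  rw [← hds z hz, Nat.card_eq_fintype_card, Fintype.card_subtype]
  refine card_nbij (fun p => (((p.1 : Fˣ) : F), ((p.2 : Fˣ) : F))) ?_ ?_ ?_
  · intro p hp
    simp only [coe_filter, mem_univ, true_and, Set.mem_ofPred_eq] at hp ⊢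
    exact ⟨⟨p.1, p.1.2, rfl⟩, ⟨p.2, p.2.2, rfl⟩, hp⟩
  · intro p _ q _ h
    simp only [Prod.mk.injEq, Units.val_inj, SetLike.coe_eq_coe] at h
    exact Prod.ext h.1 h.2
  · rintro ⟨_, _⟩ hp
    simp only [coe_filter, mem_univ, true_and, Set.mem_ofPred_eq] at hp
    obtain ⟨⟨u, hu, rfl⟩, ⟨v, hv, rfl⟩, huv⟩ := hp
    exact ⟨(⟨u, hu⟩, ⟨v, hv⟩), by simpa using huv, rfl⟩

theorem natCard_mul_sum_one_sub_eq_of_diffSet {lam : ℕ}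
    (hds : IsDiffSet (Units.val '' (H : Set Fˣ)) lam)
    (f : F → ℕ) (hf : ∀ h ∈ H, ∀ d, f (h * d) = f d) :
    Nat.card H * ∑ m ∈ univ.erase (1 : H), f (1 - (m : Fˣ)) =
      lam * ∑ d ∈ univ.erase (0 : F), f d := by
  set D : Finset (H × H) := univ ×ˢ univ.erase 1
  let diff (p : H × H) : F := ((p.1 : Fˣ) : F) - ((p.1 * p.2 : H) : Fˣ)
  have hfiber {d : F} (hd : d ∈ univ.erase 0) : #{p ∈ D | diff p = d} = lam := by
    rw [← card_sub_eq_of_isDiffSet hds (ne_of_mem_erase hd)]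
    refine card_nbij' (fun p => (p.1, p.1 * p.2)) (fun p => (p.1, p.1⁻¹ * p.2)) ?_ ?_ ?_ ?_
    · intro p hp
      simp_all [diff]
    · intro p hp
      simp only [coe_filter, mem_univ, true_and, Set.mem_ofPred_eq] at hp
      have hne : p.1 ≠ p.2 := fun h => ne_of_mem_erase hd (by rw [← hp, h, sub_self])
      simp [D, diff, inv_mul_eq_one, hne, ← hp]
    · intro p _
      simp
    · intro p _
      simp
  calc Nat.card H * ∑ m ∈ univ.erase (1 : H), f (1 - (m : Fˣ))
      = ∑ x : H, ∑ m ∈ univ.erase (1 : H), f (diff (x, m)) := by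
        rw [Nat.card_eq_fintype_card, ← card_univ, ← smul_eq_mul, ← sum_const]
        refine sum_congr rfl fun x _ => sum_congr rfl fun m _ => ?_
        rw [← hf x x.2 (1 - (m : Fˣ))]
        simp only [diff, Subgroup.coe_mul, Units.val_mul]
        ring_nf
    _ = ∑ p ∈ D, f (diff p) := (sum_product _ _ fun p => f (diff p)).symm
    _ = ∑ d ∈ univ.erase (0 : F), ∑ p ∈ D with diff p = d, f (diff p) := by
        refine (sum_fiberwise_of_maps_to (fun p hp => ?_) _).symm
        simp_all [D, diff, sub_eq_zero]
    _ = lam * ∑ d ∈ univ.erase (0 : F), f d := by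
        rw [mul_sum]
        refine sum_congr rfl fun d hd => ?_
        rw [sum_congr rfl fun p hp => congrArg f (mem_filter.mp hp).2, sum_const, hfiber hd,
          smul_eq_mul]

end DifferenceSet

theorem sum_cycNum_mul_cycNum {F : Type*} [Field F] [Fintype F] {H : Subgroup Fˣ} {lam : ℕ}
    (hds : IsDiffSet (Units.val '' (H : Set Fˣ)) lam)
    (β γ : Fˣ ⧸ H) :
    (∑ α, cycNum H α β * cycNum H α γ : ℤ) = lam * Nat.card H +
      (Nat.card H - lam) * (if β = γ then 1 else 0) -
      Nat.card H * (if β = 1 ∧ γ = 1 then 1 else 0) := by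
  have hsplit := sum_cycNum_mul_cycNum_add β γ
  have hshift : ∑ m : H, shiftCount H β γ (1 - (m : Fˣ)) =
      shiftCount H β γ 0 + ∑ m ∈ univ.erase (1 : H), shiftCount H β γ (1 - (m : Fˣ)) := by
    rw [← add_sum_erase _ _ (mem_univ 1), OneMemClass.coe_one, Units.val_one, sub_self]
  have hdiff := natCard_mul_sum_one_sub_eq_of_diffSet hds (shiftCount H β γ)
    fun _ hh => shiftCount_mul β γ hh
  have htotal : shiftCount H β γ 0 + ∑ d ∈ univ.erase (0 : F), shiftCount H β γ d =
      Nat.card H * Nat.card H := by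
    rw [add_sum_erase _ _ (mem_univ 0), sum_shiftCount]
  have hzero := shiftCount_zero β γ
  have hk : (Nat.card H : ℤ) ≠ 0 := by exact_mod_cast Nat.card_pos.ne'
  refine mul_left_cancel₀ hk ?_
  zify at hsplit hshift hdiff htotal hzero
  linear_combination (Nat.card H : ℤ) * hsplit + (Nat.card H : ℤ) * hshift + hdiff +
    (lam : ℤ) * htotal + ((Nat.card H : ℤ) - lam) * hzero

theorem cycNumMatrix_gram_of_bijective {F : Type*} [Field F] [Fintype F] {H : Subgroup Fˣ}
    {lam : ℕ} (hds : IsDiffSet (Units.val '' (H : Set Fˣ)) lam)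
    {ι : Type*} [Fintype ι] [DecidableEq ι] {c : ι → Fˣ ⧸ H} (hc : c.Bijective) {i₀ : ι}
    (hc₀ : c i₀ = 1) :
    (Matrix.of fun i j => (cycNum H (c i) (c j) : ℤ))ᵀ *
        Matrix.of (fun i j => (cycNum H (c i) (c j) : ℤ)) =
      (lam * Nat.card H : ℤ) • Matrix.of (fun _ _ => (1 : ℤ)) +
        ((Nat.card H : ℤ) - lam) • (1 : Matrix ι ι ℤ) -
        (Nat.card H : ℤ) • Matrix.single i₀ i₀ 1 := by
  ext i j
  have hsum : ∑ s, (cycNum H (c s) (c i) : ℤ) * cycNum H (c s) (c j) =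
      ∑ α, (cycNum H α (c i) : ℤ) * cycNum H α (c j) :=
    hc.sum_comp fun α => (cycNum H α (c i) : ℤ) * cycNum H α (c j)
  simp only [mul_apply, transpose_apply, of_apply, hsum, sum_cycNum_mul_cycNum hds, ← hc₀,
    hc.injective.eq_iff, Matrix.sub_apply, Matrix.add_apply, Matrix.smul_apply, one_apply,
    single_apply, smul_eq_mul, eq_comm (a := i₀)]
  split_ifs <;> ring

section PowerResidues

theorem QuotientGroup.mk_eq_mk_range_powMonoidHom {G : Type*} [CommGroup G] {n : ℕ} {a b : G} :
    (a : G ⧸ (powMonoidHom n : G →* G).range) = b ↔ ∃ y : G, b = a * y ^ n := by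
  rw [QuotientGroup.eq, MonoidHom.mem_range]
  simp only [powMonoidHom_apply]
  exact exists_congr fun y => by rw [eq_inv_mul_iff_mul_eq, eq_comm]

theorem Kset_eq_image (F : Type*) [Field F] (ℓ : ℕ) :
    Kset F ℓ = Units.val '' ((powMonoidHom ℓ : Fˣ →* Fˣ).range : Set Fˣ) := by
  ext x
  simp [Kset, eq_comm]

variable {F : Type*} [Field F] [Fintype F]

theorem mem_valCoset_range_powMonoidHom {ℓ : ℕ} {a : Fˣ} {x : F} :
    x ∈ valCoset (powMonoidHom ℓ : Fˣ →* Fˣ).range a ↔ ∃ y : Fˣ, x = ((a * y ^ ℓ : Fˣ) : F) := by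
  simp only [mem_valCoset, eq_comm (a := (_ : Fˣ ⧸ _)), QuotientGroup.mk_eq_mk_range_powMonoidHom]
  constructor
  · rintro ⟨u, ⟨y, rfl⟩, rfl⟩
    exact ⟨y, rfl⟩
  · rintro ⟨y, rfl⟩
    exact ⟨_, ⟨y, rfl⟩, rfl⟩

theorem cyc_eq_cycNum (g : Fˣ) (ℓ : ℕ) (i j : ℤ) :
    cyc g ℓ i j = cycNum (powMonoidHom ℓ : Fˣ →* Fˣ).range (g ^ i : Fˣ) (g ^ j : Fˣ) := by
  rw [cyc, Nat.card_eq_fintype_card, Fintype.card_subtype, cycNum, eq_comm]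
  refine card_nbij (fun a => 1 + (a : F)) ?_ ?_ ?_
  · intro a ha
    simp only [coe_filter, mem_univ, true_and, Set.mem_ofPred_eq,
      mem_valCoset_range_powMonoidHom] at ha ⊢
    obtain ⟨hi, hj⟩ := ha
    rw [eq_comm, QuotientGroup.mk_eq_mk_range_powMonoidHom] at hi
    obtain ⟨y, rfl⟩ := hi
    exact ⟨⟨y, rfl⟩, hj⟩
  · intro a _ b _ h
    exact Units.ext (add_left_cancel h)
  · intro x hx
    simp only [coe_filter, mem_univ, true_and, Set.mem_ofPred_eq] at hx
    obtain ⟨⟨y, rfl⟩, hj⟩ := hx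
    refine ⟨g ^ i * y ^ ℓ, ?_, rfl⟩
    simp only [coe_filter, mem_univ, true_and, Set.mem_ofPred_eq,
      mem_valCoset_range_powMonoidHom]
    exact ⟨QuotientGroup.mk_eq_mk_range_powMonoidHom.mpr ⟨y⁻¹, by group⟩, hj⟩

theorem natCard_range_powMonoidHom {ℓ : ℕ} (hℓ : ℓ ∣ Fintype.card F - 1) :
    Nat.card (powMonoidHom ℓ : Fˣ →* Fˣ).range = (Fintype.card F - 1) / ℓ := by
  rw [IsCyclic.card_powMonoidHom_range, Nat.card_units, Nat.card_eq_fintype_card,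
    Nat.gcd_eq_right hℓ]

theorem bijective_mk_zpow {g : Fˣ} (hg : ∀ x : Fˣ, x ∈ Subgroup.zpowers g) {ℓ : ℕ} [NeZero ℓ]
    (hℓ : ℓ ∣ Fintype.card F - 1) :
    Function.Bijective fun s : Fin ℓ =>
      ((g ^ ((s : ℕ) : ℤ) : Fˣ) : Fˣ ⧸ (powMonoidHom ℓ : Fˣ →* Fˣ).range) := by
  refine Function.Surjective.bijective_of_nat_card_le ?_ ?_
  · intro β
    obtain ⟨u, rfl⟩ := QuotientGroup.mk_surjective β
    obtain ⟨z, rfl⟩ := Subgroup.mem_zpowers_iff.mp (hg u)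
    have hℓ : (0 : ℤ) < ℓ := by exact_mod_cast Nat.pos_of_neZero ℓ
    have hz := Int.emod_nonneg z hℓ.ne'
    refine ⟨⟨(z % ℓ).toNat, (Int.toNat_lt hz).mpr (Int.emod_lt_of_pos z hℓ)⟩, ?_⟩
    simp only [Int.toNat_of_nonneg hz]
    rw [QuotientGroup.mk_eq_mk_range_powMonoidHom]
    refine ⟨g ^ (z / ℓ), ?_⟩
    rw [← zpow_natCast, ← _root_.zpow_mul, ← _root_.zpow_add, Int.emod_add_ediv_mul]
  · rw [Nat.card_eq_fintype_card, Fintype.card_fin, ← Subgroup.index_eq_card,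
      IsCyclic.index_powMonoidHom_range, Nat.card_units, Nat.card_eq_fintype_card,
      Nat.gcd_eq_right hℓ]

end PowerResidues

theorem cycMatrix_gram_of_diffSet_general {F : Type*} [Field F] [Fintype F] (g : Fˣ) (ℓ : ℕ)
    [NeZero ℓ] (hg : ∀ x : Fˣ, x ∈ Subgroup.zpowers g)
    (hℓ : ℓ ∣ Fintype.card F - 1)
    (k : ℕ) (hk : k = (Fintype.card F - 1) / ℓ)
    (lam : ℕ)
    (hds : IsDiffSet (Kset F ℓ) lam)
    (A : Matrix (Fin ℓ) (Fin ℓ) ℤ) (hA : A = cycMatrix g ℓ) :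
    Aᵀ * A = (lam * k : ℤ) • Matrix.of (fun _ _ => (1 : ℤ)) +
      ((k : ℤ) - lam) • (1 : Matrix (Fin ℓ) (Fin ℓ) ℤ) -
      (k : ℤ) • Matrix.single 0 0 1 := by
  have hA' : A = Matrix.of fun i j : Fin ℓ => (cycNum (powMonoidHom ℓ : Fˣ →* Fˣ).range
      (g ^ ((i : ℕ) : ℤ) : Fˣ) (g ^ ((j : ℕ) : ℤ) : Fˣ) : ℤ) := by
    rw [hA]
    ext i j
    rw [cycMatrix, of_apply, of_apply, cyc_eq_cycNum]
  rw [Kset_eq_image] at hds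
  rw [hA', hk, ← natCard_range_powMonoidHom hℓ]
  exact cycNumMatrix_gram_of_bijective hds (bijective_mk_zpow hg hℓ) (by simp)

theorem cycMatrix_gram_of_diffSet {F : Type*} [Field F] [Fintype F] (g : Fˣ) (ℓ : ℕ)
    [NeZero ℓ] (hℓ2 : 2 ≤ ℓ) (hg : ∀ x : Fˣ, x ∈ Subgroup.zpowers g)
    (hodd : Odd (Fintype.card F)) (hℓ : ℓ ∣ Fintype.card F - 1)
    (k : ℕ) (hk : k = (Fintype.card F - 1) / ℓ)
    (lam : ℕ) (hlam : lam = (k - 1) / ℓ)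
    (hds : IsDiffSet (Kset F ℓ) lam)
    (A : Matrix (Fin ℓ) (Fin ℓ) ℤ) (hA : A = cycMatrix g ℓ) :
    Aᵀ * A = (lam * k : ℤ) • Matrix.of (fun _ _ => (1 : ℤ)) +
      ((k : ℤ) - lam) • (1 : Matrix (Fin ℓ) (Fin ℓ) ℤ) -
      (k : ℤ) • Matrix.single 0 0 1 :=
  cycMatrix_gram_of_diffSet_general g ℓ hg hℓ k hk lam hds A hA
end
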